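/- arXiv:1307.7493 — 11 statements merged into one kernel-verified Lean document; each statement's English description precedes it below -/
import Mathlib

section
/- Let u ∈ X. Then u belongs to the range of the adjoint operator A*, i.e. u ∈ R(A*), if and only if there exists a constant C_u > 0 such that |⟨x, u⟩_X| ≤ C_u ‖Ax‖_Y holds for all x ∈ X. -/
open scoped RealInnerProductSpace

/-- Let `X`, `Y` be real Hilbert spaces and `A : X → Y` a bounded linear
operator. Then `u ∈ 𝓡(A*)` if and only if there is a constant `C_u > 0` with
`|⟨x, u⟩_X| ≤ C_u ‖A x‖_Y` for all `x ∈ X`. -/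
theorem mem_range_adjoint_iff_norm_bound
    {X Y : Type*} [NormedAddCommGroup X] [InnerProductSpace ℝ X] [CompleteSpace X]
    [NormedAddCommGroup Y] [InnerProductSpace ℝ Y] [CompleteSpace Y]
    (A : X →L[ℝ] Y) (u : X) :
    u ∈ Set.range (ContinuousLinearMap.adjoint A) ↔
      ∃ C : ℝ, 0 < C ∧ ∀ x : X, |⟪x, u⟫| ≤ C * ‖A x‖ := by
  constructor
  · rintro ⟨f, rfl⟩
    refine ⟨‖f‖ + 1, by positivity, fun x => ?_⟩
    have h1 : ⟪x, ContinuousLinearMap.adjoint A f⟫ = ⟪A x, f⟫ :=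
      ContinuousLinearMap.adjoint_inner_right A x f
    rw [h1]
    calc |⟪A x, f⟫| ≤ ‖A x‖ * ‖f‖ := abs_real_inner_le_norm _ _
      _ ≤ (‖f‖ + 1) * ‖A x‖ := by nlinarith [norm_nonneg (A x), norm_nonneg f]
  · rintro ⟨C, hC, hbound⟩
    -- the functional x ↦ ⟪u, x⟫ vanishes on ker A
    set φ : X →ₗ[ℝ] ℝ := (innerSL ℝ u).toLinearMap with hφ
    have hle : LinearMap.ker (A : X →ₗ[ℝ] Y) ≤ LinearMap.ker φ := by
      intro x hx
      have hx' : A x = 0 := hx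
      have := hbound x
      rw [hx', norm_zero, mul_zero] at this
      have : ⟪x, u⟫ = 0 := abs_nonpos_iff.mp this
      simpa [φ, real_inner_comm] using this
    -- descend to a functional on the range of A
    set e := LinearMap.quotKerEquivRange (A : X →ₗ[ℝ] Y) with he
    set ℓ₀ : LinearMap.range (A : X →ₗ[ℝ] Y) →ₗ[ℝ] ℝ :=
      (Submodule.liftQ (LinearMap.ker (A : X →ₗ[ℝ] Y)) φ hle).comp e.symm.toLinearMap with hℓ₀
    have key : ∀ (x : X) (h : A x ∈ LinearMap.range (A : X →ₗ[ℝ] Y)),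
        ℓ₀ ⟨A x, h⟩ = ⟪u, x⟫ := by
      intro x h
      have h1 : e ((LinearMap.ker (A : X →ₗ[ℝ] Y)).mkQ x) = ⟨A x, h⟩ := by
        apply Subtype.ext
        simp [he, LinearMap.quotKerEquivRange]
      have h2 : e.symm ⟨A x, h⟩ = (LinearMap.ker (A : X →ₗ[ℝ] Y)).mkQ x := by
        rw [← h1, LinearEquiv.symm_apply_apply]
      simp [hℓ₀, h2, φ]
    have hb : ∀ y : LinearMap.range (A : X →ₗ[ℝ] Y), ‖ℓ₀ y‖ ≤ C * ‖y‖ := by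
      rintro ⟨y, hy⟩
      obtain ⟨x, rfl⟩ := hy
      show ‖ℓ₀ ⟨A x, ⟨x, rfl⟩⟩‖ ≤ C * ‖A x‖
      rw [key x ⟨x, rfl⟩, Real.norm_eq_abs, real_inner_comm]
      exact hbound x
    set ℓ : LinearMap.range (A : X →ₗ[ℝ] Y) →L[ℝ] ℝ := ℓ₀.mkContinuous C hb with hℓ
    obtain ⟨g, hg, -⟩ := exists_extension_norm_eq (LinearMap.range (A : X →ₗ[ℝ] Y)) ℓ
    set f := (InnerProductSpace.toDual ℝ Y).symm g with hf
    refine ⟨f, ?_⟩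
    apply ext_inner_left ℝ
    intro x
    have h1 : ⟪x, ContinuousLinearMap.adjoint A f⟫ = ⟪A x, f⟫ :=
      ContinuousLinearMap.adjoint_inner_right A x f
    have h2 : ⟪A x, f⟫ = g (A x) := by
      rw [real_inner_comm]; exact InnerProductSpace.toDual_symm_apply
    have h3 : g (A x) = ℓ ⟨A x, ⟨x, rfl⟩⟩ := hg ⟨A x, ⟨x, rfl⟩⟩
    have h4 : ℓ ⟨A x, ⟨x, rfl⟩⟩ = ⟪u, x⟫ := key x ⟨x, rfl⟩
    rw [h1, h2, h3, h4, real_inner_comm]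
end

section
/- Suppose there exists a constant K > 0 such that K · sup{ |⟨x, E v⟩_X| : v ∈ V, ‖v‖_V ≤ 1 } ≤ ‖Ax‖_Y for all x ∈ X (i.e. ‖Ax‖_Y ≥ K ‖E* x‖_{V*} for all x ∈ X). Then the range inclusion range(E) ⊆ R(A*) holds, i.e. every element E v with v ∈ V belongs to the range of A*. -/
open scoped RealInnerProductSpace

/-- Let `(V, X, V*)` be a Gelfand triple (with `E : V → X` the bounded
injective embedding with dense range of the separable normed space `V` into the separable
Hilbert space `X`), let `A : X → Y` be a bounded injective linear operator into the Banach
space `Y`, and suppose there is `K > 0` with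
`K * ‖E* x‖_{V*} = K * sup {|⟪x, E v⟫| : ‖v‖_V ≤ 1} ≤ ‖A x‖` for all `x ∈ X`.
Then `range E ⊆ 𝓡(A*)`, i.e. for every `v ∈ V` there is `f ∈ Y*` with `E v = A* f`
(in the sense `⟪E v, x⟫ = f (A x)` for all `x ∈ X`). -/
theorem range_embedding_subset_range_adjoint
    {X Y V : Type*}
    [NormedAddCommGroup X] [InnerProductSpace ℝ X] [CompleteSpace X]
    [SecondCountableTopology X]
    [NormedAddCommGroup Y] [NormedSpace ℝ Y]
    [NormedAddCommGroup V] [NormedSpace ℝ V] [TopologicalSpace.SeparableSpace V]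
    (A : X →L[ℝ] Y) (hAinj : Function.Injective A)
    (E : V →L[ℝ] X) (hEinj : Function.Injective E) (hEdense : DenseRange E)
    (K : ℝ) (hK : 0 < K)
    (hKA : ∀ x : X, K * (⨆ v : {v : V // ‖v‖ ≤ 1}, |⟪x, E (v : V)⟫|) ≤ ‖A x‖) :
    ∀ v : V, ∃ f : Y →L[ℝ] ℝ, ∀ x : X, ⟪E v, x⟫ = f (A x) := by
  intro v
  -- key bound: ⟪E v, x⟫ ≤ (‖v‖/K) * ‖A x‖
  have key : ∀ x : X, ⟪E v, x⟫ ≤ (‖v‖ / K) * ‖A x‖ := by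
    intro x
    have hbdd : BddAbove (Set.range fun w : {w : V // ‖w‖ ≤ 1} => |⟪x, E (w : V)⟫|) := by
      refine ⟨‖x‖ * ‖E‖, ?_⟩
      rintro r ⟨w, rfl⟩
      have h1 : |⟪x, E (w : V)⟫| ≤ ‖x‖ * ‖E (w : V)‖ := abs_real_inner_le_norm _ _
      have h2 : ‖E (w : V)‖ ≤ ‖E‖ * ‖(w : V)‖ := E.le_opNorm _
      have h3 : ‖(w : V)‖ ≤ 1 := w.2
      have h4 : ‖E (w : V)‖ ≤ ‖E‖ := h2.trans (by nlinarith [E.opNorm_nonneg])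
      exact h1.trans (mul_le_mul_of_nonneg_left h4 (norm_nonneg x))
    have hsup : ⟪E v, x⟫ ≤ ‖v‖ * (⨆ w : {w : V // ‖w‖ ≤ 1}, |⟪x, E (w : V)⟫|) := by
      rcases eq_or_ne v 0 with rfl | hv
      · simp only [map_zero, inner_zero_left, norm_zero, zero_mul, le_refl]
      · have hvpos : (0:ℝ) < ‖v‖ := norm_pos_iff.mpr hv
        set w : V := ‖v‖⁻¹ • v with hw
        have hwn : ‖w‖ ≤ 1 := by
          rw [hw, norm_smul, norm_inv, norm_norm, inv_mul_cancel₀ hvpos.ne']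
        have hle : |⟪x, E w⟫| ≤ ⨆ w : {w : V // ‖w‖ ≤ 1}, |⟪x, E (w : V)⟫| :=
          le_ciSup hbdd ⟨w, hwn⟩
        have : ⟪E v, x⟫ = ‖v‖ * ⟪x, E w⟫ := by
          rw [hw, map_smul, inner_smul_right, real_inner_comm, ← mul_assoc,
            mul_inv_cancel₀ hvpos.ne', one_mul]
        rw [this]
        calc ‖v‖ * ⟪x, E w⟫ ≤ ‖v‖ * |⟪x, E w⟫| := by
              gcongr; exact le_abs_self _
          _ ≤ ‖v‖ * (⨆ w : {w : V // ‖w‖ ≤ 1}, |⟪x, E (w : V)⟫|) := by gcongr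
    have hKAx := hKA x
    calc ⟪E v, x⟫ ≤ ‖v‖ * (⨆ w : {w : V // ‖w‖ ≤ 1}, |⟪x, E (w : V)⟫|) := hsup
      _ ≤ ‖v‖ * (‖A x‖ / K) := by
          refine mul_le_mul_of_nonneg_left ?_ (norm_nonneg _)
          rw [le_div_iff₀ hK, mul_comm]; exact hKAx
      _ = (‖v‖ / K) * ‖A x‖ := by ring
  -- set up linear functional on range of A
  set p : Submodule ℝ Y := LinearMap.range (A : X →ₗ[ℝ] Y) with hp
  let e : X ≃ₗ[ℝ] p := LinearEquiv.ofInjective (A : X →ₗ[ℝ] Y) hAinj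
  let ψ : X →ₗ[ℝ] ℝ := (innerSL ℝ (E v)).toLinearMap
  let g : p →ₗ[ℝ] ℝ := ψ.comp e.symm.toLinearMap
  have hg : ∀ z : p, g z = ⟪E v, e.symm z⟫ := fun z => rfl
  have hgA : ∀ x : X, e.symm ⟨A x, ⟨x, rfl⟩⟩ = x := by
    intro x
    apply e.injective
    simp only [LinearEquiv.apply_symm_apply]
    ext
    rfl
  have hgle : ∀ z : p, g z ≤ (‖v‖ / K) * ‖(z : Y)‖ := by
    intro z
    obtain ⟨x, hx⟩ := z.2
    have hz : z = ⟨A x, ⟨x, rfl⟩⟩ := by ext; exact hx.symm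
    rw [hz, hg, hgA]
    simpa [hx] using key x
  obtain ⟨G, hG1, hG2⟩ := exists_extension_of_le_sublinear ⟨p, g⟩ (fun y => (‖v‖ / K) * ‖y‖)
    (fun c hc y => by
      show ‖v‖ / K * ‖c • y‖ = c * (‖v‖ / K * ‖y‖)
      rw [norm_smul, Real.norm_eq_abs, abs_of_pos hc]; ring)
    (fun y₁ y₂ => by
      show ‖v‖ / K * ‖y₁ + y₂‖ ≤ ‖v‖ / K * ‖y₁‖ + ‖v‖ / K * ‖y₂‖
      have h := norm_add_le y₁ y₂
      have hc : (0:ℝ) ≤ ‖v‖ / K := by positivity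
      nlinarith)
    hgle
  -- G is bounded
  have hGbound : ∀ y : Y, |G y| ≤ (‖v‖ / K) * ‖y‖ := by
    intro y
    rcases abs_cases (G y) with ⟨h1, _⟩ | ⟨h1, _⟩
    · rw [h1]; exact hG2 y
    · rw [h1]
      have := hG2 (-y)
      rw [map_neg, norm_neg] at this
      linarith
  refine ⟨G.mkContinuous (‖v‖ / K) fun y => by
    rw [Real.norm_eq_abs]; exact hGbound y, ?_⟩
  intro x
  have h1 : G (A x) = g ⟨A x, ⟨x, rfl⟩⟩ := hG1 ⟨A x, ⟨x, rfl⟩⟩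
  rw [hg, hgA] at h1
  simpa [LinearMap.mkContinuous_apply] using h1.symm
end

section
/- Suppose x† ∈ M_{q,w} and for every k ∈ supp(x†) there exists f_k ∈ Y* with u_k = A*f_k. Then for every x ∈ M_{q,w} the variational inequality R_{q,w}(x − x†) ≤ R_{q,w}(x) − R_{q,w}(x†) + φ_{q,w}(‖A(x − x†)‖_Y) holds, where φ_{q,w}(t) := 2 inf_{n∈ℕ} ( Σ_{k=n+1}^∞ w_k |⟨x†, u_k⟩_X|^q + t^q Σ_{k∈S_n(x†)} w_k ‖f_k‖_{Y*}^q ) and S_n(x†) = supp(x†) ∩ {1,…,n}. -/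
open scoped RealInnerProductSpace

/-- The penalty `R_{q,w}(x) = Σ_k w_k |⟨x, u_k⟩|^q`. -/
noncomputable def Rqw {X : Type*} [NormedAddCommGroup X] [InnerProductSpace ℝ X]
    (u : ℕ → X) (w : ℕ → ℝ) (q : ℝ) (x : X) : ℝ :=
  ∑' k : ℕ, w k * |⟪x, u k⟫| ^ q

/-- Membership `x ∈ M_{q,w}`, i.e. `R_{q,w}(x) < ∞`. -/
def MemMqw {X : Type*} [NormedAddCommGroup X] [InnerProductSpace ℝ X]
    (u : ℕ → X) (w : ℕ → ℝ) (q : ℝ) (x : X) : Prop :=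
  Summable fun k : ℕ => w k * |⟪x, u k⟫| ^ q

/-- The index function
`φ_{q,w}(t) = 2 inf_n ( Σ_{k ≥ n} w_k |⟨x†,u_k⟩|^q + t^q Σ_{k ∈ S_n(x†)} w_k ‖f_k‖^q )`,
where `S_n(x†)` consists of the indices `k < n` lying in the support of `x†`. -/
noncomputable def phiIdx {X Y : Type*} [NormedAddCommGroup X] [InnerProductSpace ℝ X]
    [NormedAddCommGroup Y] [NormedSpace ℝ Y]
    (u : ℕ → X) (w : ℕ → ℝ) (q : ℝ) (xdag : X) (f : ℕ → Y →L[ℝ] ℝ) (t : ℝ) : ℝ :=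
  2 * ⨅ n : ℕ, ((∑' k : ℕ, if n ≤ k then w k * |⟪xdag, u k⟫| ^ q else 0)
      + t ^ q * ∑ k ∈ Finset.filter (fun k => ⟪xdag, u k⟫ ≠ 0) (Finset.range n),
          w k * ‖f k‖ ^ q)

lemma real_rpow_add_le_add_rpow {q : ℝ} (hq0 : 0 ≤ q) (hq1 : q ≤ 1) {a b : ℝ}
    (ha : 0 ≤ a) (hb : 0 ≤ b) : (a + b) ^ q ≤ a ^ q + b ^ q := by
  have h := NNReal.rpow_add_le_add_rpow a.toNNReal b.toNNReal hq0 hq1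
  have := NNReal.coe_le_coe.2 h
  simpa [NNReal.coe_rpow, Real.coe_toNNReal _ ha, Real.coe_toNNReal _ hb,
    Real.coe_toNNReal _ (add_nonneg ha hb)] using this

lemma abs_rpow_sub_le {q : ℝ} (hq0 : 0 ≤ q) (hq1 : q ≤ 1) (a b : ℝ) :
    |a| ^ q ≤ |a - b| ^ q + |b| ^ q := by
  calc |a| ^ q ≤ (|a - b| + |b|) ^ q := by
        apply Real.rpow_le_rpow (abs_nonneg _) _ hq0
        calc |a| = |(a - b) + b| := by ring_nf
        _ ≤ |a - b| + |b| := abs_add_le _ _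
  _ ≤ |a - b| ^ q + |b| ^ q := real_rpow_add_le_add_rpow hq0 hq1 (abs_nonneg _) (abs_nonneg _)

lemma abs_sub_rpow_le {q : ℝ} (hq0 : 0 ≤ q) (hq1 : q ≤ 1) (a b : ℝ) :
    |a - b| ^ q ≤ |a| ^ q + |b| ^ q := by
  have h := abs_rpow_sub_le hq0 hq1 (a - b) (-b)
  simpa [sub_neg_eq_add, sub_add_cancel] using h

/-- **variational inequality, Theorem 4.4.** Let `{u_k}` be an orthonormal
basis of the separable Hilbert space `X`, `A : X → Y` bounded injective into a Banach space,
`0 < q ≤ 1`, weights `0 < w₀ ≤ w_k`. If `x† ∈ M_{q,w}` and for each `k ∈ supp x†` there is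
`f_k ∈ Y*` with `u_k = A* f_k`, then for every `x ∈ M_{q,w}`:
`R_{q,w}(x − x†) ≤ R_{q,w}(x) − R_{q,w}(x†) + φ_{q,w}(‖A(x − x†)‖)`. -/
theorem variational_inequality_lq
    {X Y : Type*} [NormedAddCommGroup X] [InnerProductSpace ℝ X] [CompleteSpace X]
    [NormedAddCommGroup Y] [NormedSpace ℝ Y]
    (u : ℕ → X) (hu : Orthonormal ℝ u)
    (hspan : (Submodule.span ℝ (Set.range u)).topologicalClosure = ⊤)
    (A : X →L[ℝ] Y) (hAinj : Function.Injective A)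
    (q : ℝ) (hq0 : 0 < q) (hq1 : q ≤ 1)
    (w : ℕ → ℝ) (w0 : ℝ) (hw0 : 0 < w0) (hw : ∀ k, w0 ≤ w k)
    (xdag : X) (hxdag : MemMqw u w q xdag)
    (f : ℕ → Y →L[ℝ] ℝ)
    (hf : ∀ k, ⟪xdag, u k⟫ ≠ 0 → ∀ x : X, ⟪u k, x⟫ = f k (A x)) :
    ∀ x : X, MemMqw u w q x →
      MemMqw u w q (x - xdag) ∧
      Rqw u w q (x - xdag) ≤
        Rqw u w q x - Rqw u w q xdag + phiIdx u w q xdag f (‖A (x - xdag)‖) := by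
  intro x hx
  set t : ℝ := ‖A (x - xdag)‖ with ht
  have ht0 : 0 ≤ t := norm_nonneg _
  have hq0' : (0:ℝ) ≤ q := hq0.le
  have hwnn : ∀ k, 0 ≤ w k := fun k => hw0.le.trans (hw k)
  have hsub : ∀ k, ⟪x - xdag, u k⟫ = ⟪x, u k⟫ - ⟪xdag, u k⟫ := fun k => inner_sub_left x xdag (u k)
  have hterm_nn : ∀ (y : X) (k : ℕ), 0 ≤ w k * |⟪y, u k⟫| ^ q :=
    fun y k => mul_nonneg (hwnn k) (Real.rpow_nonneg (abs_nonneg _) q)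
  have hmemle : ∀ k, w k * |⟪x - xdag, u k⟫| ^ q ≤
      w k * |⟪x, u k⟫| ^ q + w k * |⟪xdag, u k⟫| ^ q := by
    intro k
    rw [hsub k, ← mul_add]
    exact mul_le_mul_of_nonneg_left (abs_sub_rpow_le hq0' hq1 _ _) (hwnn k)
  have hmem : MemMqw u w q (x - xdag) :=
    Summable.of_nonneg_of_le (fun k => hterm_nn _ k) hmemle (hx.add hxdag)
  refine ⟨hmem, ?_⟩
  set g : ℕ → ℝ := fun n => (∑' k : ℕ, if n ≤ k then w k * |⟪xdag, u k⟫| ^ q else 0)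
      + t ^ q * ∑ k ∈ Finset.filter (fun k => ⟪xdag, u k⟫ ≠ 0) (Finset.range n),
          w k * ‖f k‖ ^ q with hg
  have key : ∀ n : ℕ, Rqw u w q (x - xdag) - Rqw u w q x + Rqw u w q xdag ≤ 2 * g n := by
    intro n
    set d1 : ℕ → ℝ := fun k => if n ≤ k then w k * |⟪xdag, u k⟫| ^ q else 0 with hd1def
    set d2 : ℕ → ℝ := fun k =>
      if k < n ∧ ⟪xdag, u k⟫ ≠ 0 then t ^ q * (w k * ‖f k‖ ^ q) else 0 with hd2def
    have hd1 : Summable d1 := by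
      apply Summable.of_nonneg_of_le _ _ hxdag
      · intro k; by_cases h : n ≤ k <;> simp [d1, h, hterm_nn xdag k]
      · intro k; by_cases h : n ≤ k <;> simp [d1, h, hterm_nn xdag k]
    have hd2 : Summable d2 := by
      apply summable_of_ne_finset_zero (s := Finset.range n)
      intro k hk
      have : ¬ k < n := by simpa [Finset.mem_range] using hk
      simp [d2, this]
    have termwise : ∀ k, w k * |⟪x - xdag, u k⟫| ^ q + w k * |⟪xdag, u k⟫| ^ q ≤
        w k * |⟪x, u k⟫| ^ q + 2 * (d1 k + d2 k) := by
      intro k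
      by_cases hkn : n ≤ k
      · have hd1k : d1 k = w k * |⟪xdag, u k⟫| ^ q := by simp [d1, hkn]
        have hd2k : d2 k = 0 := by simp [d2]; intro h; omega
        rw [hd1k, hd2k]
        have := hmemle k
        linarith
      · have hd1k : d1 k = 0 := by simp [d1, hkn]
        by_cases hb : ⟪xdag, u k⟫ = 0
        · have hd2k : d2 k = 0 := by simp [d2, hb]
          rw [hd1k, hd2k, hsub k, hb]
          simp [Real.zero_rpow hq0.ne']
        · have hd2k : d2 k = t ^ q * (w k * ‖f k‖ ^ q) := by
            simp [d2, hb, Nat.lt_of_not_le hkn]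
          rw [hd1k, hd2k]
          -- |⟪x - xdag, u k⟫| ≤ ‖f k‖ * t
          have hcb : |⟪x - xdag, u k⟫| ≤ ‖f k‖ * t := by
            have h1 : ⟪x - xdag, u k⟫ = f k (A (x - xdag)) := by
              rw [real_inner_comm]; exact hf k hb (x - xdag)
            rw [h1, ← Real.norm_eq_abs, ht]
            exact (f k).le_opNorm _
          have hc : w k * |⟪x - xdag, u k⟫| ^ q ≤ t ^ q * (w k * ‖f k‖ ^ q) := by
            have h2 : |⟪x - xdag, u k⟫| ^ q ≤ ‖f k‖ ^ q * t ^ q := by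
              rw [← Real.mul_rpow (norm_nonneg _) ht0]
              exact Real.rpow_le_rpow (abs_nonneg _) hcb hq0'
            calc w k * |⟪x - xdag, u k⟫| ^ q ≤ w k * (‖f k‖ ^ q * t ^ q) :=
                  mul_le_mul_of_nonneg_left h2 (hwnn k)
              _ = t ^ q * (w k * ‖f k‖ ^ q) := by ring
          -- |⟪xdag,u k⟫|^q ≤ |⟪x,u k⟫|^q + |⟪x-xdag,u k⟫|^q
          have hbb : w k * |⟪xdag, u k⟫| ^ q ≤
              w k * |⟪x, u k⟫| ^ q + w k * |⟪x - xdag, u k⟫| ^ q := by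
            have h3 : |⟪xdag, u k⟫| ^ q ≤ |⟪xdag, u k⟫ - ⟪x, u k⟫| ^ q + |⟪x, u k⟫| ^ q :=
              abs_rpow_sub_le hq0' hq1 _ _
            have h4 : |⟪xdag, u k⟫ - ⟪x, u k⟫| = |⟪x - xdag, u k⟫| := by
              rw [hsub k, abs_sub_comm]
            rw [h4] at h3
            calc w k * |⟪xdag, u k⟫| ^ q
                ≤ w k * (|⟪x - xdag, u k⟫| ^ q + |⟪x, u k⟫| ^ q) :=
                  mul_le_mul_of_nonneg_left h3 (hwnn k)
              _ = w k * |⟪x, u k⟫| ^ q + w k * |⟪x - xdag, u k⟫| ^ q := by ring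
          linarith
    have hsum := Summable.tsum_le_tsum termwise (hmem.add hxdag) (hx.add ((hd1.add hd2).mul_left 2))
    rw [Summable.tsum_add hmem hxdag, Summable.tsum_add hx ((hd1.add hd2).mul_left 2), tsum_mul_left,
      Summable.tsum_add hd1 hd2] at hsum
    have hd2sum : ∑' k, d2 k = t ^ q *
        ∑ k ∈ Finset.filter (fun k => ⟪xdag, u k⟫ ≠ 0) (Finset.range n), w k * ‖f k‖ ^ q := by
      rw [tsum_eq_sum (s := Finset.range n) (f := d2) ?_]
      · rw [Finset.mul_sum, Finset.sum_filter]
        apply Finset.sum_congr rfl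
        intro k hk
        have hkn : k < n := Finset.mem_range.mp hk
        by_cases hb : ⟪xdag, u k⟫ = 0 <;> simp [d2, hkn, hb]
      · intro k hk
        have : ¬ k < n := by simpa [Finset.mem_range] using hk
        simp [d2, this]
    have hd1sum : ∑' k, d1 k = ∑' k : ℕ, if n ≤ k then w k * |⟪xdag, u k⟫| ^ q else 0 := rfl
    rw [hd2sum, hd1sum] at hsum
    show (∑' k, w k * |⟪x - xdag, u k⟫| ^ q) - (∑' k, w k * |⟪x, u k⟫| ^ q)
        + (∑' k, w k * |⟪xdag, u k⟫| ^ q) ≤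
      2 * ((∑' k : ℕ, if n ≤ k then w k * |⟪xdag, u k⟫| ^ q else 0)
      + t ^ q * ∑ k ∈ Finset.filter (fun k => ⟪xdag, u k⟫ ≠ 0) (Finset.range n),
          w k * ‖f k‖ ^ q)
    linarith
  have hphi : phiIdx u w q xdag f t = 2 * ⨅ n, g n := rfl
  clear_value g
  have h2 : (Rqw u w q (x - xdag) - Rqw u w q x + Rqw u w q xdag) / 2 ≤ ⨅ n, g n := by
    apply le_ciInf
    intro n
    linarith [key n]
  rw [hphi]
  linarith [h2]
end

section
/- Suppose x† ∈ M_{q,w} and for every k ∈ supp(x†) there exists f_k ∈ Y* with u_k = A*f_k. Then the function φ_{q,w}(t) := 2 inf_{n∈ℕ} ( Σ_{k=n+1}^∞ w_k |⟨x†, u_k⟩_X|^q + t^q Σ_{k∈S_n(x†)} w_k ‖f_k‖_{Y*}^q ), with S_n(x†) = supp(x†) ∩ {1,…,n}, is a concave index function: φ_{q,w}(t) is finite for all t ∈ [0,∞), non-decreasing on [0,∞), concave on [0,∞), and satisfies lim_{t→0+} φ_{q,w}(t) = 0. -/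
/-!
For fixed `n`, the expression inside the infimum is `T n + s * S n` with `s = t ^ q`, where
`T n ≥ 0` is the `n`-th tail of the series `R_{q,w}(x†)` and `S n ≥ 0`. An infimum of
affine functions of `s` with nonnegative slopes is nonnegative, non-decreasing and concave in
`s ≥ 0`, and it tends to `inf_n T n = 0` as `s → 0+`. Composing with the non-decreasing concave map
`t ↦ t ^ q` (`0 < q ≤ 1`) of `[0, ∞)` onto itself preserves all four properties.
-/

open scoped RealInnerProductSpace

open Filter Topology Set

noncomputable def lowerEnvelope {ι : Type*} (a b : ι → ℝ) (s : ℝ) : ℝ :=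
  ⨅ i, a i + s * b i

section LowerEnvelope

variable {ι : Type*} {a b : ι → ℝ}

lemma lowerEnvelope_nonneg (ha : 0 ≤ a) (hb : 0 ≤ b) {s : ℝ} (hs : 0 ≤ s) :
    0 ≤ lowerEnvelope a b s :=
  Real.iInf_nonneg fun i => add_nonneg (ha i) (mul_nonneg hs (hb i))

lemma bddBelow_range_add_mul (ha : 0 ≤ a) (hb : 0 ≤ b) {s : ℝ} (hs : 0 ≤ s) :
    BddBelow (range fun i => a i + s * b i) :=
  ⟨0, forall_mem_range.2 fun i => add_nonneg (ha i) (mul_nonneg hs (hb i))⟩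

lemma lowerEnvelope_le (ha : 0 ≤ a) (hb : 0 ≤ b) {s : ℝ} (hs : 0 ≤ s) (i : ι) :
    lowerEnvelope a b s ≤ a i + s * b i :=
  ciInf_le (bddBelow_range_add_mul ha hb hs) i

lemma monotoneOn_lowerEnvelope (ha : 0 ≤ a) (hb : 0 ≤ b) :
    MonotoneOn (lowerEnvelope a b) (Ici 0) := fun s hs t _ hst =>
  ciInf_mono (bddBelow_range_add_mul ha hb hs) fun i => by gcongr; exact hb i

lemma concaveOn_lowerEnvelope [Nonempty ι] (ha : 0 ≤ a) (hb : 0 ≤ b) :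
    ConcaveOn ℝ (Ici 0) (lowerEnvelope a b) := by
  refine ⟨convex_Ici 0, fun x hx y hy α β hα hβ hαβ => le_ciInf fun i => ?_⟩
  calc α • lowerEnvelope a b x + β • lowerEnvelope a b y
      ≤ α * (a i + x * b i) + β * (a i + y * b i) := by
        simp only [smul_eq_mul]
        gcongr
        exacts [lowerEnvelope_le ha hb hx i, lowerEnvelope_le ha hb hy i]
    _ = a i + (α • x + β • y) * b i := by
        simp only [smul_eq_mul]
        linear_combination a i * hαβ

lemma tendsto_lowerEnvelope_nhdsWithin_zero (ha : 0 ≤ a) (hb : 0 ≤ b)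
    (h : ∀ ε > 0, ∃ i, a i < ε) : Tendsto (lowerEnvelope a b) (𝓝[≥] 0) (𝓝 0) := by
  refine tendsto_order.2 ⟨fun c hc => eventually_nhdsWithin_of_forall fun s hs =>
    hc.trans_le (lowerEnvelope_nonneg ha hb hs), fun ε hε => ?_⟩
  obtain ⟨i, hi⟩ := h ε hε
  have hnear : ∀ᶠ s in 𝓝 (0 : ℝ), a i + s * b i < ε :=
    (continuous_const.add (continuous_id.mul continuous_const)).continuousAt.eventually_lt
      continuousAt_const (by simpa using hi)
  filter_upwards [nhdsWithin_le_nhds hnear, self_mem_nhdsWithin] with s hs hs0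
  exact (lowerEnvelope_le ha hb hs0 i).trans_lt hs

end LowerEnvelope

lemma tendsto_tsum_ite_le_atTop_zero {G : Type*} [AddCommGroup G] [TopologicalSpace G]
    [IsTopologicalAddGroup G] [T2Space G] (f : ℕ → G) :
    Tendsto (fun n => ∑' k, if n ≤ k then f k else 0) atTop (𝓝 0) := by
  refine (tendsto_sum_nat_add f).congr fun n => ?_
  refine Eq.trans (by simp) ((add_left_injective n).tsum_eq fun k hk => ?_)
  have hnk : n ≤ k := by by_contra h; simp [h] at hk
  exact ⟨k - n, Nat.sub_add_cancel hnk⟩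

lemma Real.image_rpow_Ici_zero {q : ℝ} (hq : q ≠ 0) : (fun x : ℝ => x ^ q) '' Ici 0 = Ici 0 := by
  refine Subset.antisymm (image_subset_iff.2 fun x hx => Real.rpow_nonneg hx q) fun y hy => ?_
  exact ⟨y ^ q⁻¹, Real.rpow_nonneg hy _, Real.rpow_inv_rpow hy hq⟩

lemma Real.tendsto_rpow_nhdsGT_zero_nhdsGE {q : ℝ} (hq : 0 < q) :
    Tendsto (fun t : ℝ => t ^ q) (𝓝[>] 0) (𝓝[≥] 0) := by
  refine tendsto_nhdsWithin_iff.2 ⟨?_, eventually_nhdsWithin_of_forall fun t ht =>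
    Real.rpow_nonneg (le_of_lt ht) q⟩
  have := (Real.continuousAt_rpow_const 0 q (Or.inr hq.le)).tendsto
  rw [Real.zero_rpow hq.ne'] at this
  exact this.mono_left nhdsWithin_le_nhds

theorem phi_is_concave_index_function_general
    {X Y : Type*} [NormedAddCommGroup X] [InnerProductSpace ℝ X]
    [NormedAddCommGroup Y] [NormedSpace ℝ Y]
    (u : ℕ → X)
    (q : ℝ) (hq0 : 0 < q) (hq1 : q ≤ 1)
    (w : ℕ → ℝ) (w0 : ℝ) (hw0 : 0 < w0) (hw : ∀ k, w0 ≤ w k)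
    (xdag : X)
    (f : ℕ → Y →L[ℝ] ℝ) :
    (∀ t : ℝ, 0 ≤ t → 0 ≤ phiIdx u w q xdag f t) ∧
    (∀ s t : ℝ, 0 ≤ s → s ≤ t → phiIdx u w q xdag f s ≤ phiIdx u w q xdag f t) ∧
    ConcaveOn ℝ (Set.Ici 0) (phiIdx u w q xdag f) ∧
    Tendsto (phiIdx u w q xdag f) (nhdsWithin 0 (Set.Ioi 0)) (nhds 0) := by
  set T : ℕ → ℝ := fun n => ∑' k, if n ≤ k then w k * |⟪xdag, u k⟫| ^ q else 0
  set S : ℕ → ℝ := fun n =>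
    ∑ k ∈ Finset.filter (fun k => ⟪xdag, u k⟫ ≠ 0) (Finset.range n), w k * ‖f k‖ ^ q
  have hw_nonneg (k : ℕ) : 0 ≤ w k := hw0.le.trans (hw k)
  have hT : 0 ≤ T := fun n => tsum_nonneg fun k => by
    split_ifs
    exacts [mul_nonneg (hw_nonneg k) (Real.rpow_nonneg (abs_nonneg _) q), le_rfl]
  have hS : 0 ≤ S := fun n => Finset.sum_nonneg fun k _ =>
    mul_nonneg (hw_nonneg k) (Real.rpow_nonneg (norm_nonneg _) q)
  have hphi : phiIdx u w q xdag f = fun t => 2 * lowerEnvelope T S (t ^ q) := rfl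
  have himage := Real.image_rpow_Ici_zero hq0.ne'
  have hmono : MonotoneOn (fun t : ℝ => lowerEnvelope T S (t ^ q)) (Ici 0) :=
    (monotoneOn_lowerEnvelope hT hS).comp (Real.monotoneOn_rpow_Ici_of_exponent_nonneg hq0.le)
      fun t ht => Real.rpow_nonneg ht q
  have hT_small (ε : ℝ) (hε : 0 < ε) : ∃ n, T n < ε :=
    ((tendsto_tsum_ite_le_atTop_zero _).eventually (gt_mem_nhds hε)).exists
  refine ⟨fun t ht => ?_, fun s t hs hst => ?_, ?_, ?_⟩
  · rw [hphi]
    exact mul_nonneg zero_le_two (lowerEnvelope_nonneg hT hS (Real.rpow_nonneg ht q))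
  · rw [hphi]
    exact mul_le_mul_of_nonneg_left (hmono hs (hs.trans hst) hst) zero_le_two
  · rw [hphi]
    refine ConcaveOn.smul zero_le_two (ConcaveOn.comp (g := lowerEnvelope T S) ?_
      (Real.concaveOn_rpow hq0.le hq1) ?_) <;> rw [himage]
    exacts [concaveOn_lowerEnvelope hT hS, monotoneOn_lowerEnvelope hT hS]
  · rw [hphi]
    simpa using ((tendsto_lowerEnvelope_nhdsWithin_zero hT hS hT_small).comp (Real.tendsto_rpow_nhdsGT_zero_nhdsGE hq0)).const_mul 2

/-- **Theorem 4.4, properties of the rate function.** Under the assumptions of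
the variational inequality theorem, the function
`φ_{q,w}(t) = 2 inf_n ( Σ_{k ≥ n} w_k |⟨x†,u_k⟩|^q + t^q Σ_{k ∈ S_n(x†)} w_k ‖f_k‖^q )`
is a concave index function: it is finite (and nonnegative) for all `t ≥ 0`, non-decreasing
on `[0,∞)`, concave on `[0,∞)`, and `φ_{q,w}(t) → 0` as `t → 0+`. -/
theorem phi_is_concave_index_function
    {X Y : Type*} [NormedAddCommGroup X] [InnerProductSpace ℝ X] [CompleteSpace X]
    [NormedAddCommGroup Y] [NormedSpace ℝ Y]
    (u : ℕ → X) (hu : Orthonormal ℝ u)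
    (hspan : (Submodule.span ℝ (Set.range u)).topologicalClosure = ⊤)
    (A : X →L[ℝ] Y) (hAinj : Function.Injective A)
    (q : ℝ) (hq0 : 0 < q) (hq1 : q ≤ 1)
    (w : ℕ → ℝ) (w0 : ℝ) (hw0 : 0 < w0) (hw : ∀ k, w0 ≤ w k)
    (xdag : X) (hxdag : MemMqw u w q xdag)
    (f : ℕ → Y →L[ℝ] ℝ)
    (hf : ∀ k, ⟪xdag, u k⟫ ≠ 0 → ∀ x : X, ⟪u k, x⟫ = f k (A x)) :
    (∀ t : ℝ, 0 ≤ t → 0 ≤ phiIdx u w q xdag f t) ∧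
    (∀ s t : ℝ, 0 ≤ s → s ≤ t → phiIdx u w q xdag f s ≤ phiIdx u w q xdag f t) ∧
    ConcaveOn ℝ (Set.Ici 0) (phiIdx u w q xdag f) ∧
    Tendsto (phiIdx u w q xdag f) (nhdsWithin 0 (Set.Ioi 0)) (nhds 0) :=
  phi_is_concave_index_function_general u q hq0 hq1 w w0 hw0 hw xdag f
end

section
/- Let p > 1 and 0 < q < 1, let x† ≠ 0 with R_{q,w}(x†) < ∞, and set y = Ax†. Then for every α > 0 the element x† is not a minimizer of the noise-free Tikhonov functional T⁰_α(x) := (1/p)‖Ax − y‖_Y^p + α R_{q,w}(x); that is, for every α > 0 there exists x ∈ X with T⁰_α(x) < T⁰_α(x†). -/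
open scoped RealInnerProductSpace

lemma rpow_subadd {a b q : ℝ} (ha : 0 ≤ a) (hb : 0 ≤ b) (hq0 : 0 ≤ q) (hq1 : q ≤ 1) :
    (a + b) ^ q ≤ a ^ q + b ^ q := by
  have := NNReal.rpow_add_le_add_rpow a.toNNReal b.toNNReal hq0 hq1
  have h1 : ((a.toNNReal + b.toNNReal : NNReal) : ℝ) = a + b := by
    simp [Real.coe_toNNReal, ha, hb]
  calc (a + b) ^ q = (((a.toNNReal + b.toNNReal : NNReal) : ℝ)) ^ q := by rw [h1]
    _ = (((a.toNNReal + b.toNNReal) ^ q : NNReal) : ℝ) := by rw [NNReal.coe_rpow]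
    _ ≤ ((a.toNNReal ^ q + b.toNNReal ^ q : NNReal) : ℝ) := by exact_mod_cast this
    _ = a ^ q + b ^ q := by
        push_cast [NNReal.coe_rpow]
        rw [Real.coe_toNNReal a ha, Real.coe_toNNReal b hb]


set_option maxHeartbeats 1000000 in
/-- **exact penalization veto, from the proof of Theorem 4.3.** Let `p > 1`,
`0 < q < 1`, and let `x† ≠ 0` with `R_{q,w}(x†) < ∞`; set `y = A x†`. Then for every `α > 0`
the element `x†` is not a minimizer of the noise-free Tikhonov functional
`T⁰_α(x) = (1/p)‖Ax − y‖^p + α R_{q,w}(x)`. -/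
theorem xdag_not_minimizer_of_noise_free_Tikhonov
    {X Y : Type*} [NormedAddCommGroup X] [InnerProductSpace ℝ X] [CompleteSpace X]
    [NormedAddCommGroup Y] [NormedSpace ℝ Y]
    (u : ℕ → X) (hu : Orthonormal ℝ u)
    (hspan : (Submodule.span ℝ (Set.range u)).topologicalClosure = ⊤)
    (A : X →L[ℝ] Y) (hAinj : Function.Injective A)
    (p q : ℝ) (hp : 1 < p) (hq0 : 0 < q) (hq1 : q < 1)
    (w : ℕ → ℝ) (w0 : ℝ) (hw0 : 0 < w0) (hw : ∀ k, w0 ≤ w k)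
    (xdag : X) (hne : xdag ≠ 0) (hxdag : MemMqw u w q xdag) :
    ∀ α : ℝ, 0 < α → ∃ x : X,
      (1 / p) * ‖A x - A xdag‖ ^ p + α * Rqw u w q x
        < (1 / p) * ‖A xdag - A xdag‖ ^ p + α * Rqw u w q xdag := by
  intro α hα
  -- find a coordinate where xdag is nonzero
  obtain ⟨k, hc⟩ : ∃ k, ⟪xdag, u k⟫ ≠ 0 := by
    by_contra h
    push_neg at h
    apply hne
    have hmem : xdag ∈ (Submodule.span ℝ (Set.range u))ᗮ := by
      rw [Submodule.mem_orthogonal]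
      intro v hv
      induction hv using Submodule.span_induction with
      | mem v hv => obtain ⟨j, rfl⟩ := hv; rw [real_inner_comm]; exact h j
      | zero => simp
      | add v₁ v₂ _ _ h₁ h₂ => rw [inner_add_left, h₁, h₂, add_zero]
      | smul a v _ h₁ => rw [real_inner_smul_left, h₁, mul_zero]
    rw [Submodule.topologicalClosure_eq_top_iff] at hspan
    rw [hspan] at hmem
    simpa using hmem
  set c : ℝ := ⟪xdag, u k⟫ with hcdef
  have hcpos : 0 < |c| := abs_pos.mpr hc
  have hcq : 0 < |c| ^ q := Real.rpow_pos_of_pos hcpos q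
  have hwk : 0 < w k := lt_of_lt_of_le hw0 (hw k)
  set C : ℝ := ‖A‖ * |c| with hCdef
  have hC0 : 0 ≤ C := mul_nonneg (norm_nonneg _) (abs_nonneg _)
  set D : ℝ := α * (w k * (q * |c| ^ q)) with hDdef
  have hD : 0 < D := by positivity
  -- choose t
  obtain ⟨t, ht0, ht1, htkey⟩ : ∃ t : ℝ, 0 < t ∧ t < 1 ∧ (1/p) * (C*t)^p < D * t := by
    have hr : 0 < p - 1 := by linarith
    rcases eq_or_lt_of_le hC0 with hC | hC
    · refine ⟨1/2, by norm_num, by norm_num, ?_⟩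
      rw [← hC, zero_mul, Real.zero_rpow (by positivity), mul_zero]
      positivity
    · have hCp : 0 < C ^ p := Real.rpow_pos_of_pos hC p
      set E : ℝ := p * D / (2 * C ^ p) with hEdef
      have hE : 0 < E := by positivity
      refine ⟨min (1/2) (E ^ (1/(p-1))), lt_min (by norm_num) (by positivity),
        lt_of_le_of_lt (min_le_left _ _) (by norm_num), ?_⟩
      set t : ℝ := min (1/2) (E ^ (1/(p-1))) with htdef
      have ht0 : 0 < t := lt_min (by norm_num) (by positivity)
      have htr : t ^ (p - 1) ≤ E := by
        calc t ^ (p-1) ≤ (E ^ (1/(p-1))) ^ (p-1) :=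
              Real.rpow_le_rpow ht0.le (min_le_right _ _) hr.le
          _ = E := by
              rw [← Real.rpow_mul hE.le, one_div, inv_mul_cancel₀ hr.ne', Real.rpow_one]
      have htp : t ^ p = t ^ (1:ℝ) * t ^ (p - 1) := by
        rw [← Real.rpow_add ht0]; ring_nf
      have hmul : (C * t) ^ p = C ^ p * t ^ p := Real.mul_rpow hC.le ht0.le
      rw [hmul, htp]
      have h1 : C ^ p * t ^ (p - 1) ≤ C ^ p * E := by
        exact mul_le_mul_of_nonneg_left htr hCp.le
      have h2 : C ^ p * E = p * D / 2 := by
        rw [hEdef]; field_simp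
      have hp0 : 0 < p := by linarith
      rw [Real.rpow_one]
      calc 1 / p * (C ^ p * (t * t ^ (p - 1)))
          = (C ^ p * t ^ (p - 1)) * (t / p) := by ring
        _ ≤ (C ^ p * E) * (t / p) := by
            exact mul_le_mul_of_nonneg_right h1 (by positivity)
        _ = D * t / 2 := by rw [h2]; field_simp
        _ < D * t := by nlinarith
  -- the perturbed point
  classical
  refine ⟨xdag - (t * c) • u k, ?_⟩
  have hu1 : ‖u k‖ = 1 := hu.1 k
  set x : X := xdag - (t * c) • u k with hxdef
  -- norm of the residual
  have hres : A x - A xdag = -((t * c) • A (u k)) := by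
    rw [hxdef, map_sub, map_smul]; abel
  have hnorm : ‖A x - A xdag‖ ≤ C * t := by
    rw [hres, norm_neg, norm_smul]
    calc ‖t * c‖ * ‖A (u k)‖ ≤ ‖t * c‖ * (‖A‖ * ‖u k‖) :=
          mul_le_mul_of_nonneg_left (A.le_opNorm _) (norm_nonneg _)
      _ = C * t := by
          rw [hu1, Real.norm_eq_abs, abs_mul, abs_of_pos ht0, hCdef]; ring
  have hp0 : 0 < p := by linarith
  have hterm1 : (1/p) * ‖A x - A xdag‖ ^ p ≤ (1/p) * (C * t) ^ p := by
    have := Real.rpow_le_rpow (norm_nonneg _) hnorm hp0.le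
    exact mul_le_mul_of_nonneg_left this (by positivity)
  -- inner products of x
  have horth : ∀ i j : ℕ, ⟪u i, u j⟫ = if i = j then 1 else 0 := by
    rw [← orthonormal_iff_ite]; exact hu
  have hxinner : ∀ j, ⟪x, u j⟫ = if j = k then (1 - t) * c else ⟪xdag, u j⟫ := by
    intro j
    rw [hxdef, inner_sub_left, real_inner_smul_left, horth]
    by_cases hj : j = k
    · subst hj; simp [hcdef]; ring
    · simp [Ne.symm hj, hj]
  set f : ℕ → ℝ := fun j => w j * |⟪xdag, u j⟫| ^ q with hfdef
  have hsum : HasSum f (Rqw u w q xdag) := hxdag.hasSum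
  have hfx : (fun j => w j * |⟪x, u j⟫| ^ q)
      = Function.update f k (w k * |(1 - t) * c| ^ q) := by
    funext j
    by_cases hj : j = k
    · subst hj; rw [Function.update_self, hxinner, if_pos rfl]
    · rw [Function.update_of_ne hj, hxinner, if_neg hj]
  have hsx : HasSum (fun j => w j * |⟪x, u j⟫| ^ q)
      ((w k * |(1 - t) * c| ^ q) - f k + Rqw u w q xdag) := by
    rw [hfx]; exact hsum.update k _
  have hRx : Rqw u w q x = (w k * |(1 - t) * c| ^ q) - w k * |c| ^ q + Rqw u w q xdag := by
    rw [Rqw, hsx.tsum_eq, hfdef, hcdef]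
  -- penalty drop via q-subadditivity
  have h1t : 0 < 1 - t := by linarith
  have habs : |(1 - t) * c| = (1 - t) * |c| := by rw [abs_mul, abs_of_pos h1t]
  have hbern : (1 - t) ^ q ≤ 1 - q * t := by
    have := rpow_one_add_le_one_add_mul_self (s := -t) (by linarith) hq0.le hq1.le
    have e1 : (1 : ℝ) + -t = 1 - t := by ring
    have e2 : (1 : ℝ) + q * -t = 1 - q * t := by ring
    rwa [e1, e2] at this
  have hmulr : ((1 - t) * |c|) ^ q = (1 - t) ^ q * |c| ^ q :=
    Real.mul_rpow h1t.le (abs_nonneg _)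
  have hdrop : w k * |(1 - t) * c| ^ q - w k * |c| ^ q ≤ -(w k * (q * |c| ^ q) * t) := by
    rw [habs, hmulr]
    nlinarith [mul_le_mul_of_nonneg_left hbern (le_of_lt (mul_pos hwk hcq)), hwk, hcq]
  -- collect
  have hz : ‖A xdag - A xdag‖ ^ p = 0 := by
    rw [sub_self, norm_zero, Real.zero_rpow hp0.ne']
  rw [hz, mul_zero, zero_add]
  have hDt : α * (w k * (q * |c| ^ q) * t) = D * t := by rw [hDdef]; ring
  nlinarith [hterm1, htkey, hRx, hα,
    mul_le_mul_of_nonneg_left hdrop hα.le, hDt]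
end

section
/- Let p > 1 and 0 < q < 1, let x† ≠ 0 satisfy Ax† = y and x† ∈ M_{q,w}, and suppose for every k ∈ supp(x†) there exists f_k ∈ Y* with u_k = A*f_k. Then there exist constants C > 0 and δ̄ > 0 such that for every 0 < δ ≤ δ̄, every y^δ with ‖y − y^δ‖_Y ≤ δ, and every regularization parameter α* ∈ Δ_θ chosen according to the sequential discrepancy principle, the regularized solution satisfies R_{q,w}(x_{α*}^δ − x†) ≤ C φ_{q,w}(δ), where φ_{q,w}(t) := 2 inf_{n∈ℕ} ( Σ_{k=n+1}^∞ w_k |⟨x†, u_k⟩_X|^q + t^q Σ_{k∈S_n(x†)} w_k ‖f_k‖_{Y*}^q ) and S_n(x†) = supp(x†) ∩ {1,…,n}. -/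
open scoped RealInnerProductSpace

/-- The Tikhonov functional `T_α^δ(x) = (1/p)‖Ax − y^δ‖^p + α R_{q,w}(x)`. -/
noncomputable def Tik {X Y : Type*} [NormedAddCommGroup X] [InnerProductSpace ℝ X]
    [NormedAddCommGroup Y] [NormedSpace ℝ Y]
    (u : ℕ → X) (w : ℕ → ℝ) (q : ℝ) (A : X →L[ℝ] Y) (p α : ℝ) (ydel : Y) (x : X) : ℝ :=
  (1 / p) * ‖A x - ydel‖ ^ p + α * Rqw u w q x

/-- `xhat` is a (global) minimizer of the Tikhonov functional `T_α^δ`; since every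
minimizer has finite value, this is expressed as: `xhat ∈ M_{q,w}` and `xhat` minimizes
`T_α^δ` over `M_{q,w}` (outside of `M_{q,w}` the functional is `+∞`). -/
def IsTikMinimizer {X Y : Type*} [NormedAddCommGroup X] [InnerProductSpace ℝ X]
    [NormedAddCommGroup Y] [NormedSpace ℝ Y]
    (u : ℕ → X) (w : ℕ → ℝ) (q : ℝ) (A : X →L[ℝ] Y) (p α : ℝ) (ydel : Y) (xhat : X) : Prop :=
  MemMqw u w q xhat ∧
    ∀ x : X, MemMqw u w q x → Tik u w q A p α ydel xhat ≤ Tik u w q A p α ydel x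

/-- The grid `Δ_θ = { θ^j α₀ : j ∈ ℤ }` of regularization parameters. -/
def Dtheta (θ α₀ : ℝ) : Set ℝ := {a : ℝ | ∃ j : ℤ, a = θ ^ j * α₀}


lemma aux_rpow_add {x y q : ℝ} (hx : 0 ≤ x) (hy : 0 ≤ y) (hq : 0 ≤ q) (hq1 : q ≤ 1) :
    (x + y) ^ q ≤ x ^ q + y ^ q := by
  have h := NNReal.rpow_add_le_add_rpow (x.toNNReal) (y.toNNReal) hq hq1
  rw [← Real.coe_toNNReal x hx, ← Real.coe_toNNReal y hy]
  exact_mod_cast h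

lemma aux_abs_rpow {a b q : ℝ} (hq : 0 ≤ q) (hq1 : q ≤ 1) :
    |a + b| ^ q ≤ |a| ^ q + |b| ^ q :=
  le_trans (Real.rpow_le_rpow (abs_nonneg _) (abs_add_le a b) hq)
    (aux_rpow_add (abs_nonneg a) (abs_nonneg b) hq hq1)

lemma aux_abs_rpow' {a b q : ℝ} (hq : 0 ≤ q) (hq1 : q ≤ 1) :
    |a| ^ q ≤ |a - b| ^ q + |b| ^ q := by
  have := aux_abs_rpow (a := a - b) (b := b) hq hq1
  simpa using this

lemma aux_tsum_finset {s : Finset ℕ} (t : ℕ → ℝ) :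
    ∑' k : ℕ, (if k ∈ s then t k else 0) = ∑ k ∈ s, t k := by
  rw [tsum_eq_sum (s := s) (fun k hk => if_neg hk)]
  exact Finset.sum_congr rfl fun k hk => if_pos hk

lemma aux_split (t : ℕ → ℝ) (ht : Summable t) (n : ℕ) :
    ∑' k, t k = (∑ k ∈ Finset.range n, t k) + ∑' k : ℕ, if n ≤ k then t k else 0 := by
  have h1 : Summable (fun k : ℕ => if n ≤ k then t k else 0) := by
    exact (ht.indicator {k | n ≤ k}).congr
      (fun k => by simp [Set.indicator_apply])
  have h2 : Summable (fun k : ℕ => if k ∈ Finset.range n then t k else 0) :=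
    summable_of_ne_finset_zero (s := Finset.range n) (fun k hk => if_neg hk)
  have h3 : ∀ k, t k = (if k ∈ Finset.range n then t k else 0) + (if n ≤ k then t k else 0) := by
    intro k
    rcases lt_or_ge k n with h | h
    · rw [if_pos (Finset.mem_range.mpr h), if_neg (by omega)]; ring
    · rw [if_neg (by simp [Finset.mem_range]; omega), if_pos h]; ring
  calc ∑' k, t k = ∑' k, ((if k ∈ Finset.range n then t k else 0) + (if n ≤ k then t k else 0)) :=
        tsum_congr h3
    _ = (∑' k : ℕ, if k ∈ Finset.range n then t k else 0) + ∑' k : ℕ, (if n ≤ k then t k else 0) :=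
        Summable.tsum_add h2 h1
    _ = (∑ k ∈ Finset.range n, t k) + ∑' k : ℕ, (if n ≤ k then t k else 0) := by
        rw [aux_tsum_finset]

lemma aux_tail_summable {q : ℝ} (w c : ℕ → ℝ)
    (hsc : Summable fun k => w k * |c k| ^ q) (n : ℕ) :
    Summable (fun k : ℕ => if n ≤ k then w k * |c k| ^ q else 0) :=
  (hsc.indicator {k | n ≤ k}).congr (fun k => by simp [Set.indicator_apply])

lemma aux_tail_nonneg {q : ℝ} (w c : ℕ → ℝ) (hw : ∀ k, 0 ≤ w k) (n : ℕ) :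
    0 ≤ ∑' k : ℕ, (if n ≤ k then w k * |c k| ^ q else 0) := by
  apply tsum_nonneg
  intro k
  split_ifs
  · exact mul_nonneg (hw k) (Real.rpow_nonneg (abs_nonneg _) q)
  · exact le_rfl

/-- Main decomposition estimate for `R(x_α - x†)`. -/
lemma aux_star {q : ℝ} (hq0 : 0 < q) (hq1 : q ≤ 1)
    (w c a F : ℕ → ℝ) (hw : ∀ k, 0 ≤ w k) (hF : ∀ k, 0 ≤ F k)
    (hsc : Summable fun k => w k * |c k| ^ q)
    (hsa : Summable fun k => w k * |a k| ^ q)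
    (ε : ℝ) (hε : 0 ≤ ε)
    (hbound : ∀ k, c k ≠ 0 → |a k - c k| ≤ ε * F k) (n : ℕ) :
    (∑' k, w k * |a k - c k| ^ q)
      ≤ 2 * (∑' k : ℕ, if n ≤ k then w k * |c k| ^ q else 0)
        + 2 * ε ^ q * (∑ k ∈ Finset.filter (fun k => c k ≠ 0) (Finset.range n), w k * F k ^ q)
        + ((∑' k, w k * |a k| ^ q) - (∑' k, w k * |c k| ^ q)) := by
  classical
  have hrn : ∀ (x : ℝ), 0 ≤ |x| ^ q := fun x => Real.rpow_nonneg (abs_nonneg _) q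
  have hz_le : ∀ k, w k * |a k - c k| ^ q ≤ w k * |a k| ^ q + w k * |c k| ^ q := by
    intro k
    have h1 : |a k - c k| ^ q ≤ |a k| ^ q + |c k| ^ q := by
      have := aux_abs_rpow (a := a k) (b := -(c k)) hq0.le hq1
      simpa [sub_eq_add_neg] using this
    nlinarith [hw k, hrn (a k), hrn (c k), mul_le_mul_of_nonneg_left h1 (hw k)]
  have hsz : Summable (fun k => w k * |a k - c k| ^ q) := by
    apply Summable.of_nonneg_of_le (fun k => mul_nonneg (hw k) (hrn _)) hz_le (hsa.add hsc)
  have hst : Summable (fun k : ℕ => if n ≤ k then w k * |c k| ^ q else 0) :=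
    aux_tail_summable w c hsc n
  -- termwise comparison
  set Fn : ℕ → ℝ := fun k =>
    w k * |a k - c k| ^ q + (if k ∈ Finset.range n then w k * |c k| ^ q else 0) with hFn
  set Gn : ℕ → ℝ := fun k =>
    (if k ∈ Finset.filter (fun k => c k ≠ 0) (Finset.range n) then
        2 * ε ^ q * (w k * F k ^ q) else 0)
      + ((if n ≤ k then w k * |c k| ^ q else 0) + w k * |a k| ^ q) with hGn
  have hFG : ∀ k, Fn k ≤ Gn k := by
    intro k
    simp only [hFn, hGn]
    rcases lt_or_ge k n with hkn | hkn
    · have hmem : k ∈ Finset.range n := Finset.mem_range.mpr hkn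
      have htail : ¬ n ≤ k := by omega
      by_cases hck : c k = 0
      · have hfil : k ∉ Finset.filter (fun k => c k ≠ 0) (Finset.range n) := by
          simp [Finset.mem_filter, hck]
        rw [if_pos hmem, if_neg hfil, if_neg htail, hck]
        simp [Real.zero_rpow hq0.ne']
      · have hfil : k ∈ Finset.filter (fun k => c k ≠ 0) (Finset.range n) := by
          simp [Finset.mem_filter, hmem, hck]
        rw [if_pos hmem, if_pos hfil, if_neg htail]
        have e1 : |a k - c k| ^ q ≤ ε ^ q * F k ^ q := by
          rw [← Real.mul_rpow hε (hF k)]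
          exact Real.rpow_le_rpow (abs_nonneg _) (hbound k hck) hq0.le
        have e2 : |c k| ^ q ≤ |a k| ^ q + |a k - c k| ^ q := by
          have : |c k| ^ q ≤ |c k - a k| ^ q + |a k| ^ q := aux_abs_rpow' hq0.le hq1
          rw [abs_sub_comm] at this
          linarith
        nlinarith [hw k, mul_le_mul_of_nonneg_left e1 (hw k),
          mul_le_mul_of_nonneg_left e2 (hw k)]
    · have hmem : k ∉ Finset.range n := by simp [Finset.mem_range]; omega
      have hfil : k ∉ Finset.filter (fun k => c k ≠ 0) (Finset.range n) := by
        simp [Finset.mem_filter, Finset.mem_range]; omega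
      rw [if_neg hmem, if_neg hfil, if_pos hkn]
      have := hz_le k
      linarith
  have hsF : Summable Fn :=
    hsz.add (summable_of_ne_finset_zero (s := Finset.range n) (fun k hk => if_neg hk))
  have hsG : Summable Gn :=
    ((summable_of_ne_finset_zero (s := Finset.filter (fun k => c k ≠ 0) (Finset.range n))
      (fun k hk => if_neg hk))).add (hst.add hsa)
  have hmain := Summable.tsum_le_tsum hFG hsF hsG
  have hFval : ∑' k, Fn k
      = (∑' k, w k * |a k - c k| ^ q) + ∑ k ∈ Finset.range n, w k * |c k| ^ q := by
    rw [hFn, Summable.tsum_add hsz (summable_of_ne_finset_zero (s := Finset.range n)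
      (fun k hk => if_neg hk)), aux_tsum_finset]
  have hGval : ∑' k, Gn k
      = 2 * ε ^ q * (∑ k ∈ Finset.filter (fun k => c k ≠ 0) (Finset.range n), w k * F k ^ q)
        + ((∑' k : ℕ, if n ≤ k then w k * |c k| ^ q else 0) + ∑' k, w k * |a k| ^ q) := by
    rw [hGn, Summable.tsum_add (summable_of_ne_finset_zero
        (s := Finset.filter (fun k => c k ≠ 0) (Finset.range n)) (fun k hk => if_neg hk))
        (hst.add hsa),
      Summable.tsum_add hst hsa, aux_tsum_finset, Finset.mul_sum]
  have hsplit := aux_split (fun k => w k * |c k| ^ q) hsc n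
  rw [hFval, hGval] at hmain
  linarith

/-- Estimate for `R(x†) - R(x_β)`. -/
lemma aux_D {q : ℝ} (hq0 : 0 < q) (hq1 : q ≤ 1)
    (w c b F : ℕ → ℝ) (hw : ∀ k, 0 ≤ w k) (hF : ∀ k, 0 ≤ F k)
    (hsc : Summable fun k => w k * |c k| ^ q)
    (hsb : Summable fun k => w k * |b k| ^ q)
    (d : ℝ) (hd : 0 ≤ d)
    (hbound : ∀ k, c k ≠ 0 → |c k - b k| ≤ d * F k) (n : ℕ) :
    (∑' k, w k * |c k| ^ q) - (∑' k, w k * |b k| ^ q)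
      ≤ (∑' k : ℕ, if n ≤ k then w k * |c k| ^ q else 0)
        + d ^ q * (∑ k ∈ Finset.filter (fun k => c k ≠ 0) (Finset.range n), w k * F k ^ q) := by
  classical
  have hrn : ∀ (x : ℝ), 0 ≤ |x| ^ q := fun x => Real.rpow_nonneg (abs_nonneg _) q
  have hst : Summable (fun k : ℕ => if n ≤ k then w k * |c k| ^ q else 0) :=
    aux_tail_summable w c hsc n
  set H : ℕ → ℝ := fun k =>
    (if k ∈ Finset.filter (fun k => c k ≠ 0) (Finset.range n) then
        d ^ q * (w k * F k ^ q) else 0)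
      + (if n ≤ k then w k * |c k| ^ q else 0) with hH
  have hterm : ∀ k, w k * |c k| ^ q - w k * |b k| ^ q ≤ H k := by
    intro k
    simp only [hH]
    rcases lt_or_ge k n with hkn | hkn
    · have htail : ¬ n ≤ k := by omega
      by_cases hck : c k = 0
      · have hfil : k ∉ Finset.filter (fun k => c k ≠ 0) (Finset.range n) := by
          simp [Finset.mem_filter, hck]
        rw [if_neg hfil, if_neg htail, hck]
        simp only [abs_zero, Real.zero_rpow hq0.ne', mul_zero, zero_sub, add_zero]
        have := mul_nonneg (hw k) (hrn (b k))
        linarith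
      · have hfil : k ∈ Finset.filter (fun k => c k ≠ 0) (Finset.range n) := by
          simp [Finset.mem_filter, Finset.mem_range, hkn, hck]
        rw [if_pos hfil, if_neg htail]
        have e1 : |c k - b k| ^ q ≤ d ^ q * F k ^ q := by
          rw [← Real.mul_rpow hd (hF k)]
          exact Real.rpow_le_rpow (abs_nonneg _) (hbound k hck) hq0.le
        have e2 : |c k| ^ q ≤ |c k - b k| ^ q + |b k| ^ q := aux_abs_rpow' hq0.le hq1
        nlinarith [hw k, mul_le_mul_of_nonneg_left e1 (hw k),
          mul_le_mul_of_nonneg_left e2 (hw k)]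
    · have hfil : k ∉ Finset.filter (fun k => c k ≠ 0) (Finset.range n) := by
        simp [Finset.mem_filter, Finset.mem_range]; omega
      rw [if_neg hfil, if_pos hkn]
      have := mul_nonneg (hw k) (hrn (b k))
      linarith
  have hsH : Summable H :=
    ((summable_of_ne_finset_zero (s := Finset.filter (fun k => c k ≠ 0) (Finset.range n))
      (fun k hk => if_neg hk))).add hst
  have hsub : Summable (fun k => w k * |c k| ^ q - w k * |b k| ^ q) := hsc.sub hsb
  have hmain := Summable.tsum_le_tsum hterm hsub hsH
  rw [Summable.tsum_sub hsc hsb] at hmain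
  have hHval : ∑' k, H k
      = d ^ q * (∑ k ∈ Finset.filter (fun k => c k ≠ 0) (Finset.range n), w k * F k ^ q)
        + (∑' k : ℕ, if n ≤ k then w k * |c k| ^ q else 0) := by
    rw [hH, Summable.tsum_add (summable_of_ne_finset_zero
        (s := Finset.filter (fun k => c k ≠ 0) (Finset.range n)) (fun k hk => if_neg hk)) hst,
      aux_tsum_finset, Finset.mul_sum]
  rw [hHval] at hmain
  linarith

lemma aux_fin {R C2 : ℝ} {g : ℕ → ℝ} (hC2 : 0 < C2) (h : ∀ n, R ≤ C2 * g n) :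
    R ≤ C2 / 2 * (2 * ⨅ n, g n) := by
  have h1 : R / C2 ≤ ⨅ n, g n :=
    le_ciInf fun n => by rw [div_le_iff₀ hC2]; exact (h n).trans_eq (mul_comm _ _)
  calc R = C2 * (R / C2) := by field_simp
    _ ≤ C2 * ⨅ n, g n := mul_le_mul_of_nonneg_left h1 hC2.le
    _ = C2 / 2 * (2 * ⨅ n, g n) := by ring


set_option maxHeartbeats 1000000 in
/-- **Corollary 4.5: convergence rate under the sequential discrepancy
principle.** Let `p > 1`, `0 < q < 1`, `x† ≠ 0` with `A x† = y`, `x† ∈ M_{q,w}`, and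
`u_k = A* f_k` for all `k ∈ supp x†`. Then there are `C > 0` and `δ̄ > 0` such that for all
`0 < δ ≤ δ̄`, all data `y^δ` with `‖y − y^δ‖ ≤ δ`, every selection of minimizers of
`T_α^δ` over `Δ_θ` and every `α* ∈ Δ_θ` chosen by the sequential discrepancy principle,
`R_{q,w}(x_{α*}^δ − x†) ≤ C φ_{q,w}(δ)`. -/
theorem convergence_rate_under_sdp
    {X Y : Type*} [NormedAddCommGroup X] [InnerProductSpace ℝ X] [CompleteSpace X]
    [NormedAddCommGroup Y] [NormedSpace ℝ Y]
    (u : ℕ → X) (hu : Orthonormal ℝ u)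
    (hspan : (Submodule.span ℝ (Set.range u)).topologicalClosure = ⊤)
    (A : X →L[ℝ] Y) (hAinj : Function.Injective A)
    (hrange : ¬ IsClosed (Set.range A))
    (p q : ℝ) (hp : 1 < p) (hq0 : 0 < q) (hq1 : q < 1)
    (w : ℕ → ℝ) (w0 : ℝ) (hw0 : 0 < w0) (hw : ∀ k, w0 ≤ w k)
    (xdag : X) (hne : xdag ≠ 0) (hxdag : MemMqw u w q xdag)
    (f : ℕ → Y →L[ℝ] ℝ)
    (hf : ∀ k, ⟪xdag, u k⟫ ≠ 0 → ∀ x : X, ⟪u k, x⟫ = f k (A x))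
    (θ α₀ τ : ℝ) (hθ0 : 0 < θ) (hθ1 : θ < 1) (hα₀ : 0 < α₀) (hτ : 1 < τ) :
    ∃ C : ℝ, 0 < C ∧ ∃ δbar : ℝ, 0 < δbar ∧
      ∀ δ : ℝ, 0 < δ → δ ≤ δbar → ∀ ydel : Y, ‖A xdag - ydel‖ ≤ δ →
        ∀ xm : ℝ → X, (∀ α ∈ Dtheta θ α₀, IsTikMinimizer u w q A p α ydel (xm α)) →
          ∀ αstar ∈ Dtheta θ α₀,
            ‖A (xm αstar) - ydel‖ ≤ τ * δ → τ * δ < ‖A (xm (αstar / θ)) - ydel‖ →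
              Rqw u w q (xm αstar - xdag) ≤ C * phiIdx u w q xdag f δ := by
  classical
  have hp0 : (0:ℝ) < p := lt_trans one_pos hp
  have hτ0 : (0:ℝ) < τ := lt_trans one_pos hτ
  have hτp : (1:ℝ) < τ ^ p :=
    (Real.one_lt_rpow_iff_of_pos hτ0).mpr (Or.inl ⟨hτ, hp0⟩)
  have hτppos : (0:ℝ) < τ ^ p := lt_trans one_pos hτp
  have hK2pos : (0:ℝ) < 1 - (τ ^ p)⁻¹ := by
    have : (τ ^ p)⁻¹ < 1 := inv_lt_one_of_one_lt₀ hτp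
    linarith
  obtain ⟨K2, hK2def⟩ : ∃ K2 : ℝ, K2 = (1 - (τ ^ p)⁻¹)⁻¹ := ⟨_, rfl⟩
  have hK2 : 0 < K2 := by rw [hK2def]; exact inv_pos.mpr hK2pos
  have hKinv : K2 * (1 - (τ ^ p)⁻¹) = 1 := by rw [hK2def]; exact inv_mul_cancel₀ hK2pos.ne'
  have htq : (0:ℝ) ≤ (τ + 1) ^ q := Real.rpow_nonneg (by linarith) q
  have h2q : (0:ℝ) ≤ (2:ℝ) ^ q := Real.rpow_nonneg (by norm_num) q
  have hK2θ : (0:ℝ) ≤ K2 / θ := le_of_lt (div_pos hK2 hθ0)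
  obtain ⟨C2, hC2def⟩ : ∃ C2 : ℝ,
      C2 = 2 + 2 * (τ + 1) ^ q + (K2 / θ) * (1 + (2:ℝ) ^ q) := ⟨_, rfl⟩
  have hC2 : 0 < C2 := by
    rw [hC2def]
    have h1 : 0 ≤ (K2 / θ) * (1 + (2:ℝ) ^ q) := mul_nonneg hK2θ (by linarith)
    have h2 : 0 ≤ 2 * (τ + 1) ^ q := by linarith
    linarith
  refine ⟨C2 / 2, by linarith, 1, one_pos, ?_⟩
  intro δ hδ hδbar ydel hy xm hxm αstar hαΔ hd1 hd2
  obtain ⟨j, hj⟩ := hαΔ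
  have hαpos : 0 < αstar := by rw [hj]; exact mul_pos (zpow_pos hθ0 j) hα₀
  have hβΔ : αstar / θ ∈ Dtheta θ α₀ := by
    refine ⟨j - 1, ?_⟩
    rw [hj, zpow_sub₀ (ne_of_gt hθ0), zpow_one]
    ring
  have hβpos : 0 < αstar / θ := div_pos hαpos hθ0
  have hwnn : ∀ k, 0 ≤ w k := fun k => le_trans hw0.le (hw k)
  obtain ⟨hmemA, hminA0⟩ := hxm αstar ⟨j, hj⟩
  obtain ⟨hmemB, hminB0⟩ := hxm (αstar / θ) hβΔ
  obtain ⟨dβ, hdβdef⟩ : ∃ d : ℝ, d = ‖A (xm (αstar / θ)) - ydel‖ := ⟨_, rfl⟩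
  rw [← hdβdef] at hd2
  have hτδ : (0:ℝ) < τ * δ := mul_pos hτ0 hδ
  have hdβpos : 0 < dβ := lt_trans hτδ hd2
  have hδdβ : δ ≤ dβ := by nlinarith [mul_pos hδ (sub_pos.mpr hτ)]
  -- the norm bounds coming from the source condition
  have hAz : ‖A (xm αstar) - A xdag‖ ≤ (τ + 1) * δ := by
    have e : A (xm αstar) - A xdag = (A (xm αstar) - ydel) - (A xdag - ydel) := by abel
    rw [e]
    calc ‖(A (xm αstar) - ydel) - (A xdag - ydel)‖
        ≤ ‖A (xm αstar) - ydel‖ + ‖A xdag - ydel‖ := norm_sub_le _ _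
      _ ≤ τ * δ + δ := add_le_add hd1 hy
      _ = (τ + 1) * δ := by ring
  have hAz2 : ‖A xdag - A (xm (αstar / θ))‖ ≤ dβ + δ := by
    have e : A xdag - A (xm (αstar / θ)) = (A xdag - ydel) - (A (xm (αstar / θ)) - ydel) := by
      abel
    rw [e]
    calc ‖(A xdag - ydel) - (A (xm (αstar / θ)) - ydel)‖
        ≤ ‖A xdag - ydel‖ + ‖A (xm (αstar / θ)) - ydel‖ := norm_sub_le _ _
      _ ≤ δ + dβ := by rw [hdβdef]; exact add_le_add hy le_rfl
      _ = dβ + δ := by ring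
  have hbound1 : ∀ k, ⟪xdag, u k⟫ ≠ 0 →
      |⟪xm αstar, u k⟫ - ⟪xdag, u k⟫| ≤ ((τ + 1) * δ) * ‖f k‖ := by
    intro k hk
    have e : ⟪xm αstar, u k⟫ - ⟪xdag, u k⟫ = f k (A (xm αstar - xdag)) := by
      rw [← inner_sub_left, real_inner_comm]
      exact hf k hk _
    rw [e]
    calc |f k (A (xm αstar - xdag))| = ‖f k (A (xm αstar - xdag))‖ := (Real.norm_eq_abs _).symm
      _ ≤ ‖f k‖ * ‖A (xm αstar - xdag)‖ := (f k).le_opNorm _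
      _ ≤ ‖f k‖ * ((τ + 1) * δ) := by
          refine mul_le_mul_of_nonneg_left ?_ (norm_nonneg _)
          rw [map_sub]; exact hAz
      _ = ((τ + 1) * δ) * ‖f k‖ := mul_comm _ _
  have hbound2 : ∀ k, ⟪xdag, u k⟫ ≠ 0 →
      |⟪xdag, u k⟫ - ⟪xm (αstar / θ), u k⟫| ≤ (dβ + δ) * ‖f k‖ := by
    intro k hk
    have e : ⟪xdag, u k⟫ - ⟪xm (αstar / θ), u k⟫ = f k (A (xdag - xm (αstar / θ))) := by
      rw [← inner_sub_left, real_inner_comm]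
      exact hf k hk _
    rw [e]
    calc |f k (A (xdag - xm (αstar / θ)))| = ‖f k (A (xdag - xm (αstar / θ)))‖ :=
          (Real.norm_eq_abs _).symm
      _ ≤ ‖f k‖ * ‖A (xdag - xm (αstar / θ))‖ := (f k).le_opNorm _
      _ ≤ ‖f k‖ * (dβ + δ) := by
          refine mul_le_mul_of_nonneg_left ?_ (norm_nonneg _)
          rw [map_sub]; exact hAz2
      _ = (dβ + δ) * ‖f k‖ := mul_comm _ _
  -- minimality inequalities
  have hminA := hminA0 xdag hxdag
  simp only [Tik] at hminA
  have hminB := hminB0 xdag hxdag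
  simp only [Tik] at hminB
  rw [← hdβdef] at hminB
  have hnp : ‖A xdag - ydel‖ ^ p ≤ δ ^ p := Real.rpow_le_rpow (norm_nonneg _) hy hp0.le
  have hinvp : (0:ℝ) < 1 / p := one_div_pos.mpr hp0
  have hB : p * αstar * (Rqw u w q (xm αstar) - Rqw u w q xdag) ≤ δ ^ p := by
    have e1 : (1 / p) * ‖A xdag - ydel‖ ^ p ≤ (1 / p) * δ ^ p :=
      mul_le_mul_of_nonneg_left hnp hinvp.le
    have e2 : (0:ℝ) ≤ (1 / p) * ‖A (xm αstar) - ydel‖ ^ p :=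
      mul_nonneg hinvp.le (Real.rpow_nonneg (norm_nonneg _) p)
    have e3 : αstar * Rqw u w q (xm αstar) - αstar * Rqw u w q xdag ≤ (1 / p) * δ ^ p := by
      linarith
    calc p * αstar * (Rqw u w q (xm αstar) - Rqw u w q xdag)
        = p * (αstar * Rqw u w q (xm αstar) - αstar * Rqw u w q xdag) := by ring
      _ ≤ p * ((1 / p) * δ ^ p) := mul_le_mul_of_nonneg_left e3 hp0.le
      _ = δ ^ p := by field_simp
  have hC1 : dβ ^ p - δ ^ p
      ≤ p * (αstar / θ) * (Rqw u w q xdag - Rqw u w q (xm (αstar / θ))) := by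
    have e1 : (1 / p) * ‖A xdag - ydel‖ ^ p ≤ (1 / p) * δ ^ p :=
      mul_le_mul_of_nonneg_left hnp hinvp.le
    have e3 : (1 / p) * (dβ ^ p - δ ^ p)
        ≤ (αstar / θ) * (Rqw u w q xdag - Rqw u w q (xm (αstar / θ))) := by
      have h : (1 / p) * dβ ^ p + (αstar / θ) * Rqw u w q (xm (αstar / θ))
          ≤ (1 / p) * δ ^ p + (αstar / θ) * Rqw u w q xdag := by linarith
      have e4 : (1 / p) * (dβ ^ p - δ ^ p) = (1 / p) * dβ ^ p - (1 / p) * δ ^ p := by ring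
      have e5 : (αstar / θ) * (Rqw u w q xdag - Rqw u w q (xm (αstar / θ)))
          = (αstar / θ) * Rqw u w q xdag - (αstar / θ) * Rqw u w q (xm (αstar / θ)) := by ring
      linarith [h, e4, e5]
    calc dβ ^ p - δ ^ p = p * ((1 / p) * (dβ ^ p - δ ^ p)) := by field_simp
      _ ≤ p * ((αstar / θ) * (Rqw u w q xdag - Rqw u w q (xm (αstar / θ)))) :=
          mul_le_mul_of_nonneg_left e3 hp0.le
      _ = p * (αstar / θ) * (Rqw u w q xdag - Rqw u w q (xm (αstar / θ))) := by ring
  -- basic rpow comparisons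
  have s1 : τ ^ p * δ ^ p ≤ dβ ^ p := by
    have h := Real.rpow_le_rpow hτδ.le hd2.le hp0.le
    rwa [Real.mul_rpow hτ0.le hδ.le] at h
  have s2 : δ ^ p ≤ dβ ^ p := Real.rpow_le_rpow hδ.le hδdβ hp0.le
  have s3 : (dβ + δ) ^ q ≤ (2:ℝ) ^ q * dβ ^ q := by
    have h : dβ + δ ≤ 2 * dβ := by linarith
    have h2 := Real.rpow_le_rpow (by linarith : (0:ℝ) ≤ dβ + δ) h hq0.le
    rwa [Real.mul_rpow (by norm_num) hdβpos.le] at h2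
  have s4 : δ ^ p * dβ ^ q ≤ δ ^ q * dβ ^ p := by
    have e1 : δ ^ p = δ ^ q * δ ^ (p - q) := by
      rw [← Real.rpow_add hδ]; congr 1; ring
    have e2 : dβ ^ p = dβ ^ q * dβ ^ (p - q) := by
      rw [← Real.rpow_add hdβpos]; congr 1; ring
    have s4' : δ ^ (p - q) ≤ dβ ^ (p - q) :=
      Real.rpow_le_rpow hδ.le hδdβ (by linarith)
    calc δ ^ p * dβ ^ q = (δ ^ q * dβ ^ q) * δ ^ (p - q) := by rw [e1]; ring
      _ ≤ (δ ^ q * dβ ^ q) * dβ ^ (p - q) :=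
          mul_le_mul_of_nonneg_left s4'
            (mul_nonneg (Real.rpow_nonneg hδ.le q) (Real.rpow_nonneg hdβpos.le q))
      _ = δ ^ q * dβ ^ p := by rw [e2]; ring
  have v1 : δ ^ p ≤ (τ ^ p)⁻¹ * dβ ^ p := by
    have h : δ ^ p ≤ dβ ^ p / τ ^ p := by
      rw [le_div_iff₀ hτppos, mul_comm]; exact s1
    rwa [div_eq_inv_mul] at h
  -- the per-n estimate
  have key : ∀ n : ℕ, Rqw u w q (xm αstar - xdag)
      ≤ C2 * ((∑' k : ℕ, if n ≤ k then w k * |⟪xdag, u k⟫| ^ q else 0)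
          + δ ^ q * ∑ k ∈ Finset.filter (fun k => ⟪xdag, u k⟫ ≠ 0) (Finset.range n),
              w k * ‖f k‖ ^ q) := by
    intro n
    obtain ⟨T, hTdef⟩ : ∃ t : ℝ,
        t = ∑' k : ℕ, if n ≤ k then w k * |⟪xdag, u k⟫| ^ q else 0 := ⟨_, rfl⟩
    obtain ⟨S, hSdef⟩ : ∃ s : ℝ,
        s = ∑ k ∈ Finset.filter (fun k => ⟪xdag, u k⟫ ≠ 0) (Finset.range n),
            w k * ‖f k‖ ^ q := ⟨_, rfl⟩
    have hT : 0 ≤ T := by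
      rw [hTdef]; exact aux_tail_nonneg w (fun k => ⟪xdag, u k⟫) hwnn n
    have hS : 0 ≤ S := by
      rw [hSdef]
      exact Finset.sum_nonneg fun k _ =>
        mul_nonneg (hwnn k) (Real.rpow_nonneg (norm_nonneg _) q)
    have hδq : (0:ℝ) ≤ δ ^ q := Real.rpow_nonneg hδ.le q
    -- decomposition estimate
    have hstar : Rqw u w q (xm αstar - xdag)
        ≤ 2 * T + 2 * ((τ + 1) * δ) ^ q * S
          + (Rqw u w q (xm αstar) - Rqw u w q xdag) := by
      have e : Rqw u w q (xm αstar - xdag)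
          = ∑' k, w k * |⟪xm αstar, u k⟫ - ⟪xdag, u k⟫| ^ q := by
        simp only [Rqw, inner_sub_left]
      rw [hTdef, hSdef, e]
      exact aux_star hq0 hq1.le w (fun k => ⟪xdag, u k⟫) (fun k => ⟪xm αstar, u k⟫)
        (fun k => ‖f k‖) hwnn (fun k => norm_nonneg _) hxdag hmemA ((τ + 1) * δ)
        (mul_nonneg (by linarith) hδ.le) hbound1 n
    -- estimate for R(x†) - R(x_β)
    have hD : Rqw u w q xdag - Rqw u w q (xm (αstar / θ)) ≤ T + (dβ + δ) ^ q * S := by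
      rw [hTdef, hSdef]
      exact aux_D hq0 hq1.le w (fun k => ⟪xdag, u k⟫) (fun k => ⟪xm (αstar / θ), u k⟫)
        (fun k => ‖f k‖) hwnn (fun k => norm_nonneg _) hxdag hmemB (dβ + δ)
        (by linarith) hbound2 n
    -- lower bound for αstar via the discrepancy at αstar/θ
    have m1 : δ ^ p * (dβ ^ p - δ ^ p)
        ≤ δ ^ p * (p * (αstar / θ) * (T + (dβ + δ) ^ q * S)) := by
      have h1 := mul_le_mul_of_nonneg_left hC1 (Real.rpow_nonneg hδ.le p)
      have h2 : p * (αstar / θ) * (Rqw u w q xdag - Rqw u w q (xm (αstar / θ)))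
          ≤ p * (αstar / θ) * (T + (dβ + δ) ^ q * S) :=
        mul_le_mul_of_nonneg_left hD (mul_pos hp0 hβpos).le
      have h3 := mul_le_mul_of_nonneg_left h2 (Real.rpow_nonneg hδ.le p)
      linarith
    have u1 : δ ^ p * T ≤ dβ ^ p * T := mul_le_mul_of_nonneg_right s2 hT
    have u2 : δ ^ p * ((dβ + δ) ^ q * S) ≤ (2:ℝ) ^ q * (δ ^ q * dβ ^ p) * S := by
      have w1 : δ ^ p * (dβ + δ) ^ q ≤ (2:ℝ) ^ q * (δ ^ q * dβ ^ p) := by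
        calc δ ^ p * (dβ + δ) ^ q ≤ δ ^ p * ((2:ℝ) ^ q * dβ ^ q) :=
              mul_le_mul_of_nonneg_left s3 (Real.rpow_nonneg hδ.le p)
          _ = (2:ℝ) ^ q * (δ ^ p * dβ ^ q) := by ring
          _ ≤ (2:ℝ) ^ q * (δ ^ q * dβ ^ p) := mul_le_mul_of_nonneg_left s4 h2q
      calc δ ^ p * ((dβ + δ) ^ q * S) = (δ ^ p * (dβ + δ) ^ q) * S := by ring
        _ ≤ ((2:ℝ) ^ q * (δ ^ q * dβ ^ p)) * S := mul_le_mul_of_nonneg_right w1 hS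
    have m5 : δ ^ p * (p * (αstar / θ) * (T + (dβ + δ) ^ q * S))
        ≤ p * (αstar / θ) * ((T + (2:ℝ) ^ q * (δ ^ q * S)) * dβ ^ p) := by
      have h := mul_le_mul_of_nonneg_left (add_le_add u1 u2) (mul_pos hp0 hβpos).le
      calc δ ^ p * (p * (αstar / θ) * (T + (dβ + δ) ^ q * S))
          = p * (αstar / θ) * (δ ^ p * T + δ ^ p * ((dβ + δ) ^ q * S)) := by ring
        _ ≤ p * (αstar / θ) * (dβ ^ p * T + (2:ℝ) ^ q * (δ ^ q * dβ ^ p) * S) := h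
        _ = p * (αstar / θ) * ((T + (2:ℝ) ^ q * (δ ^ q * S)) * dβ ^ p) := by ring
    have m6 : (1 - (τ ^ p)⁻¹) * δ ^ p * dβ ^ p ≤ δ ^ p * (dβ ^ p - δ ^ p) := by
      have h := mul_nonneg (Real.rpow_nonneg hδ.le p) (sub_nonneg.mpr v1)
      have e : δ ^ p * (dβ ^ p - δ ^ p) - (1 - (τ ^ p)⁻¹) * δ ^ p * dβ ^ p
          = δ ^ p * ((τ ^ p)⁻¹ * dβ ^ p - δ ^ p) := by ring
      linarith [h, e]
    have hdβp : (0:ℝ) < dβ ^ p := Real.rpow_pos_of_pos hdβpos p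
    have m8 : (1 - (τ ^ p)⁻¹) * δ ^ p ≤ p * (αstar / θ) * (T + (2:ℝ) ^ q * (δ ^ q * S)) := by
      have h7 : ((1 - (τ ^ p)⁻¹) * δ ^ p) * dβ ^ p
          ≤ (p * (αstar / θ) * (T + (2:ℝ) ^ q * (δ ^ q * S))) * dβ ^ p :=
        le_trans (le_trans m6 m1) (m5.trans_eq (by ring))
      exact le_of_mul_le_mul_right h7 hdβp
    have hC : δ ^ p ≤ K2 * (p * (αstar / θ) * (T + (2:ℝ) ^ q * (δ ^ q * S))) := by
      calc δ ^ p = K2 * ((1 - (τ ^ p)⁻¹) * δ ^ p) := by rw [← mul_assoc, hKinv, one_mul]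
        _ ≤ K2 * (p * (αstar / θ) * (T + (2:ℝ) ^ q * (δ ^ q * S))) :=
            mul_le_mul_of_nonneg_left m8 hK2.le
    have hRaRc : Rqw u w q (xm αstar) - Rqw u w q xdag
        ≤ (K2 / θ) * (T + (2:ℝ) ^ q * (δ ^ q * S)) := by
      have h1 : p * αstar * (Rqw u w q (xm αstar) - Rqw u w q xdag)
          ≤ K2 * (p * (αstar / θ) * (T + (2:ℝ) ^ q * (δ ^ q * S))) := le_trans hB hC
      have h2 : K2 * (p * (αstar / θ) * (T + (2:ℝ) ^ q * (δ ^ q * S)))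
          = (p * αstar) * ((K2 / θ) * (T + (2:ℝ) ^ q * (δ ^ q * S))) := by
        field_simp
      rw [h2] at h1
      have hpα : (0:ℝ) < p * αstar := mul_pos hp0 hαpos
      calc Rqw u w q (xm αstar) - Rqw u w q xdag
          = (p * αstar)⁻¹ * (p * αstar * (Rqw u w q (xm αstar) - Rqw u w q xdag)) := by
            field_simp
        _ ≤ (p * αstar)⁻¹ * ((p * αstar) * ((K2 / θ) * (T + (2:ℝ) ^ q * (δ ^ q * S)))) :=
            mul_le_mul_of_nonneg_left h1 (inv_pos.mpr hpα).le
        _ = (K2 / θ) * (T + (2:ℝ) ^ q * (δ ^ q * S)) := by field_simp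
    -- combine everything
    have eτδ : ((τ + 1) * δ) ^ q = (τ + 1) ^ q * δ ^ q :=
      Real.mul_rpow (by linarith) hδ.le
    rw [eτδ] at hstar
    have final : 2 * T + 2 * ((τ + 1) ^ q * δ ^ q) * S
        + (K2 / θ) * (T + (2:ℝ) ^ q * (δ ^ q * S)) ≤ C2 * (T + δ ^ q * S) := by
      have a1 : 0 ≤ (τ + 1) ^ q * T := mul_nonneg htq hT
      have a2 : 0 ≤ (K2 / θ) * ((2:ℝ) ^ q * T) := mul_nonneg hK2θ (mul_nonneg h2q hT)
      have a3 : 0 ≤ δ ^ q * S := mul_nonneg hδq hS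
      have a4 : 0 ≤ (K2 / θ) * (δ ^ q * S) := mul_nonneg hK2θ a3
      rw [hC2def]
      have e : (2 + 2 * (τ + 1) ^ q + (K2 / θ) * (1 + (2:ℝ) ^ q)) * (T + δ ^ q * S)
          - (2 * T + 2 * ((τ + 1) ^ q * δ ^ q) * S
              + (K2 / θ) * (T + (2:ℝ) ^ q * (δ ^ q * S)))
          = 2 * ((τ + 1) ^ q * T) + (K2 / θ) * ((2:ℝ) ^ q * T) + 2 * (δ ^ q * S)
              + (K2 / θ) * (δ ^ q * S) := by ring
      linarith [a1, a2, a3, a4, e]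
    rw [← hTdef, ← hSdef]
    have h2star : 2 * ((τ + 1) ^ q * δ ^ q) * S = 2 * (τ + 1) ^ q * δ ^ q * S := by ring
    linarith [hstar, hRaRc, final]
  -- conclude via the infimum
  simp only [phiIdx]
  exact aux_fin hC2 key
end

section
/- Suppose x† is sparse, i.e. supp(x†) is finite, and for every k ∈ supp(x†) there exists f_k ∈ Y* with u_k = A*f_k. Then for all t ≥ 0 the index function satisfies φ_{q,w}(t) ≤ 2 t^q Σ_{k∈supp(x†)} w_k ‖f_k‖_{Y*}^q; in particular φ_{q,w}(t)^{1/q} ≤ C t with constant C = ( 2 Σ_{k∈supp(x†)} w_k ‖f_k‖_{Y*}^q )^{1/q}. -/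
open scoped RealInnerProductSpace

/-- **Corollary 4.5, sparse case: linear rate.** If `x†` is sparse, i.e.
`supp(x†)` is finite, and `u_k = A* f_k` for all `k ∈ supp x†`, then for all `t ≥ 0`
`φ_{q,w}(t) ≤ 2 t^q Σ_{k ∈ supp x†} w_k ‖f_k‖^q`, and in particular
`φ_{q,w}(t)^{1/q} ≤ C t` with `C = (2 Σ_{k ∈ supp x†} w_k ‖f_k‖^q)^{1/q}`. -/
theorem phi_linear_rate_of_sparse
    {X Y : Type*} [NormedAddCommGroup X] [InnerProductSpace ℝ X] [CompleteSpace X]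
    [NormedAddCommGroup Y] [NormedSpace ℝ Y]
    (u : ℕ → X) (hu : Orthonormal ℝ u)
    (hspan : (Submodule.span ℝ (Set.range u)).topologicalClosure = ⊤)
    (A : X →L[ℝ] Y) (hAinj : Function.Injective A)
    (q : ℝ) (hq0 : 0 < q) (hq1 : q ≤ 1)
    (w : ℕ → ℝ) (w0 : ℝ) (hw0 : 0 < w0) (hw : ∀ k, w0 ≤ w k)
    (xdag : X) (hfin : {k : ℕ | ⟪xdag, u k⟫ ≠ 0}.Finite)
    (f : ℕ → Y →L[ℝ] ℝ)
    (hf : ∀ k, ⟪xdag, u k⟫ ≠ 0 → ∀ x : X, ⟪u k, x⟫ = f k (A x)) :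
    ∀ t : ℝ, 0 ≤ t →
      phiIdx u w q xdag f t ≤ 2 * t ^ q * ∑ k ∈ hfin.toFinset, w k * ‖f k‖ ^ q ∧
      phiIdx u w q xdag f t ^ (1 / q) ≤
        (2 * ∑ k ∈ hfin.toFinset, w k * ‖f k‖ ^ q) ^ (1 / q) * t := by

  intro t ht
  have hwnn : ∀ k, (0:ℝ) ≤ w k := fun k => hw0.le.trans (hw k)
  set S := ∑ k ∈ hfin.toFinset, w k * ‖f k‖ ^ q with hSdef
  have hSnn : 0 ≤ S :=
    Finset.sum_nonneg fun k _ => mul_nonneg (hwnn k) (Real.rpow_nonneg (norm_nonneg _) q)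
  set g : ℕ → ℝ := fun n =>
    ((∑' k : ℕ, if n ≤ k then w k * |⟪xdag, u k⟫| ^ q else 0)
      + t ^ q * ∑ k ∈ Finset.filter (fun k => ⟪xdag, u k⟫ ≠ 0) (Finset.range n),
          w k * ‖f k‖ ^ q) with hg
  have hgnn : ∀ n, 0 ≤ g n := by
    intro n
    apply add_nonneg
    · refine tsum_nonneg fun k => ?_
      by_cases h : n ≤ k
      · simp only [h, if_true]
        exact mul_nonneg (hwnn k) (Real.rpow_nonneg (abs_nonneg _) q)
      · simp [h]
    · exact mul_nonneg (Real.rpow_nonneg ht q)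
        (Finset.sum_nonneg fun k _ => mul_nonneg (hwnn k) (Real.rpow_nonneg (norm_nonneg _) q))
  have hbdd : BddBelow (Set.range g) := ⟨0, by rintro _ ⟨n, rfl⟩; exact hgnn n⟩
  set N : ℕ := hfin.toFinset.sup id + 1 with hN
  have hmem : ∀ k, ⟪xdag, u k⟫ ≠ 0 → k < N := by
    intro k hk
    have : k ∈ hfin.toFinset := hfin.mem_toFinset.mpr hk
    have h2 : k ≤ hfin.toFinset.sup id := Finset.le_sup (f := id) this
    omega
  have htail : (∑' k : ℕ, if N ≤ k then w k * |⟪xdag, u k⟫| ^ q else 0) = 0 := by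
    have : (fun k : ℕ => if N ≤ k then w k * |⟪xdag, u k⟫| ^ q else 0) = fun _ => 0 := by
      funext k
      by_cases h : N ≤ k
      · have hz : ⟪xdag, u k⟫ = 0 := by
          by_contra hc
          exact absurd (hmem k hc) (by omega)
        simp [h, hz, Real.zero_rpow hq0.ne']
      · simp [h]
    rw [this, tsum_zero]
  have hfilter : Finset.filter (fun k => ⟪xdag, u k⟫ ≠ 0) (Finset.range N) = hfin.toFinset := by
    ext k
    simp only [Finset.mem_filter, Finset.mem_range, hfin.mem_toFinset, Set.mem_setOf_eq]
    exact ⟨fun h => h.2, fun h => ⟨hmem k h, h⟩⟩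
  have hgN : g N = t ^ q * S := by
    rw [hg]; simp only [htail, hfilter, zero_add, hSdef]
  have hinf_le : (⨅ n : ℕ, g n) ≤ t ^ q * S := hgN ▸ ciInf_le hbdd N
  have hinf_nn : 0 ≤ ⨅ n : ℕ, g n := le_ciInf hgnn
  have hphi : phiIdx u w q xdag f t = 2 * ⨅ n : ℕ, g n := rfl
  have h1 : phiIdx u w q xdag f t ≤ 2 * t ^ q * S := by
    rw [hphi, mul_assoc]
    exact mul_le_mul_of_nonneg_left hinf_le (by norm_num)
  refine ⟨h1, ?_⟩
  have hphinn : 0 ≤ phiIdx u w q xdag f t := by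
    rw [hphi]; positivity
  have h2 : phiIdx u w q xdag f t ≤ (2 * S) * t ^ q := by
    rw [mul_right_comm]
    exact h1
  calc phiIdx u w q xdag f t ^ (1 / q) ≤ ((2 * S) * t ^ q) ^ (1 / q) :=
        Real.rpow_le_rpow hphinn h2 (by positivity)
    _ = (2 * S) ^ (1 / q) * (t ^ q) ^ (1 / q) :=
        Real.mul_rpow (by positivity) (Real.rpow_nonneg ht q)
    _ = (2 * S) ^ (1 / q) * t := by
        rw [← Real.rpow_mul ht, mul_one_div_cancel hq0.ne', Real.rpow_one]
end

section
/- Let p > 1 and 0 < q < 1, let x† ≠ 0 satisfy Ax† = y and x† ∈ M_{q,w}, and suppose for every k ∈ supp(x†) there exists f_k ∈ Y* with u_k = A*f_k. If the regularization parameter α* = α*(δ, y^δ) ∈ Δ_θ is chosen according to the sequential discrepancy principle with τ > 1, then α*(δ, y^δ) ≥ (θ / (p 2^{p−1})) · ((τ^p − 1)/(τ^p + 1)) · Φ_{q,w}((τ − 1)δ), where Φ_{q,w}(t) := t^p / φ_{q,w}(t) and φ_{q,w}(t) := 2 inf_{n∈ℕ} ( Σ_{k=n+1}^∞ w_k |⟨x†,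 u_k⟩_X|^q + t^q Σ_{k∈S_n(x†)} w_k ‖f_k‖_{Y*}^q ). -/
open scoped RealInnerProductSpace

/-! Write `α' = α*/θ`, `x' = x_{α'}^δ` and `d = ‖A x' - y^δ‖ > τδ`. Comparing the Tikhonov
values of `x'` and `x†` gives `d^p - δ^p ≤ p α' (R(x†) - R(x'))`. The source condition
`u_k = A* f_k` bounds each coefficient gap `|⟨x†,u_k⟩|^q - |⟨x',u_k⟩|^q` by
`‖f_k‖^q ‖A(x† - x')‖^q`, so that `R(x†) - R(x') ≤ φ(d + δ) / 2`, and as `q ≤ 1` the function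
`φ(s) / s` is nonincreasing, which moves this bound down to `t = (τ - 1)δ ≤ d + δ`. The claimed
constant then comes from the elementary estimate of `(d^p - δ^p) / (d + δ)` for `d ≥ τδ`. -/

lemma rpow_add_le_two_rpow_mul {x y p : ℝ} (hx : 0 ≤ x) (hy : 0 ≤ y) (hp : 1 ≤ p) :
    (x + y) ^ p ≤ 2 ^ (p - 1) * (x ^ p + y ^ p) := by
  lift x to NNReal using hx
  lift y to NNReal using hy
  exact_mod_cast NNReal.rpow_add_le_mul_rpow_add_rpow x y hp

lemma abs_rpow_le_abs_rpow_add_abs_sub_rpow (a b : ℝ) {q : ℝ} (hq0 : 0 ≤ q) (hq1 : q ≤ 1) :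
    |a| ^ q ≤ |b| ^ q + |a - b| ^ q :=
  calc |a| ^ q ≤ (|b| + |a - b|) ^ q := by
        gcongr
        simpa using abs_add_le b (a - b)
    _ ≤ |b| ^ q + |a - b| ^ q := Real.rpow_add_le_add_rpow (abs_nonneg _) (abs_nonneg _) hq0 hq1

lemma rpow_le_div_mul_rpow {s t q : ℝ} (ht : 0 < t) (hts : t ≤ s) (hq : q ≤ 1) :
    s ^ q ≤ s / t * t ^ q := by
  have hs : 0 < s := ht.trans_le hts
  calc s ^ q = s ^ (q - 1) * s := by rw [Real.rpow_sub_one hs.ne']; field_simp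
    _ ≤ t ^ (q - 1) * s :=
        mul_le_mul_of_nonneg_right (Real.rpow_le_rpow_of_nonpos ht hts (by linarith)) hs.le
    _ = s / t * t ^ q := by rw [Real.rpow_sub_one ht.ne']; ring

lemma add_one_mul_sub_one_rpow_le {τ p : ℝ} (hτ : 1 ≤ τ) (hp : 1 ≤ p) :
    (τ + 1) * (τ - 1) ^ (p - 1) ≤ 2 ^ (p - 1) * (τ ^ p + 1) :=
  calc (τ + 1) * (τ - 1) ^ (p - 1) ≤ (τ + 1) * (τ + 1) ^ (p - 1) := by
        gcongr
        linarith
    _ = (τ + 1) ^ p := by rw [Real.rpow_sub_one (by linarith)]; field_simp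
    _ ≤ 2 ^ (p - 1) * (τ ^ p + 1) := by
        simpa using rpow_add_le_two_rpow_mul (by linarith : 0 ≤ τ) zero_le_one hp

lemma sub_one_mul_rpow_mul_add_le {τ δ d p : ℝ} (hτ : 1 < τ) (hδ : 0 < δ) (hp : 1 < p)
    (hd : τ * δ ≤ d) :
    ((τ - 1) * δ) ^ (p - 1) * τ ^ p * (d + δ) ≤ 2 ^ (p - 1) * (τ ^ p + 1) * d ^ p := by
  have hτ0 : 0 < τ := by linarith
  have hd0 : 0 < d := by nlinarith
  have hτ1 : 0 < τ - 1 := by linarith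
  have hpow : (τ * ((τ - 1) * δ)) ^ (p - 1) ≤ ((τ - 1) * d) ^ (p - 1) :=
    Real.rpow_le_rpow (by positivity) (by nlinarith) (by linarith)
  rw [Real.mul_rpow hτ0.le (by positivity), Real.mul_rpow (by linarith) hd0.le] at hpow
  calc ((τ - 1) * δ) ^ (p - 1) * τ ^ p * (d + δ)
      = (τ ^ (p - 1) * ((τ - 1) * δ) ^ (p - 1)) * (τ * (d + δ)) := by
        rw [Real.rpow_sub_one hτ0.ne']; field_simp
    _ ≤ ((τ - 1) ^ (p - 1) * d ^ (p - 1)) * ((τ + 1) * d) :=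
        mul_le_mul hpow (by nlinarith) (by positivity) (by positivity)
    _ = (τ + 1) * (τ - 1) ^ (p - 1) * d ^ p := by rw [Real.rpow_sub_one hd0.ne']; field_simp
    _ ≤ 2 ^ (p - 1) * (τ ^ p + 1) * d ^ p :=
        mul_le_mul_of_nonneg_right (add_one_mul_sub_one_rpow_le hτ.le hp.le) (by positivity)

lemma discrepancy_rpow_bound {τ δ d p : ℝ} (hτ : 1 < τ) (hδ : 0 < δ) (hp : 1 < p)
    (hd : τ * δ ≤ d) :
    (τ ^ p - 1) / (τ ^ p + 1) * ((τ - 1) * δ) ^ p * (d + δ)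
      ≤ 2 ^ p * ((τ - 1) * δ) * (d ^ p - δ ^ p) := by
  have hτ0 : 0 < τ := by linarith
  have hτ1 : 0 < τ - 1 := by linarith
  have ht : 0 < (τ - 1) * δ := mul_pos hτ1 hδ
  have hτp : 1 < τ ^ p := Real.one_lt_rpow hτ (by linarith)
  have hδd : δ ^ p ≤ d ^ p := Real.rpow_le_rpow hδ.le (by nlinarith) (by linarith)
  have hτδd : τ ^ p * δ ^ p ≤ d ^ p := by
    rw [← Real.mul_rpow hτ0.le hδ.le]
    exact Real.rpow_le_rpow (by positivity) hd (by linarith)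
  have hgap : (τ ^ p - 1) * d ^ p ≤ 2 * τ ^ p * (d ^ p - δ ^ p) := by
    nlinarith [mul_le_mul_of_nonneg_left hδd (by linarith : (0 : ℝ) ≤ τ ^ p)]
  have hc : 0 ≤ (τ ^ p - 1) / (τ ^ p + 1) * ((τ - 1) * δ) / τ ^ p :=
    div_nonneg (mul_nonneg (div_nonneg (by linarith) (by linarith)) ht.le) (by linarith)
  calc (τ ^ p - 1) / (τ ^ p + 1) * ((τ - 1) * δ) ^ p * (d + δ)
      = (τ ^ p - 1) / (τ ^ p + 1) * ((τ - 1) * δ) / τ ^ p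
          * (((τ - 1) * δ) ^ (p - 1) * τ ^ p * (d + δ)) := by
        rw [Real.rpow_sub_one ht.ne']; field_simp [hτ1.ne']
    _ ≤ (τ ^ p - 1) / (τ ^ p + 1) * ((τ - 1) * δ) / τ ^ p
          * (2 ^ (p - 1) * (τ ^ p + 1) * d ^ p) :=
        mul_le_mul_of_nonneg_left (sub_one_mul_rpow_mul_add_le hτ hδ hp hd) hc
    _ = 2 ^ (p - 1) * ((τ - 1) * δ) / τ ^ p * ((τ ^ p - 1) * d ^ p) := by
        field_simp
    _ ≤ 2 ^ (p - 1) * ((τ - 1) * δ) / τ ^ p * (2 * τ ^ p * (d ^ p - δ ^ p)) :=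
        mul_le_mul_of_nonneg_left hgap (by positivity)
    _ = 2 ^ p * ((τ - 1) * δ) * (d ^ p - δ ^ p) := by
        rw [Real.rpow_sub_one two_ne_zero]; field_simp

lemma tsum_ite_le_add_sum_range {a : ℕ → ℝ} (ha : Summable a) (n : ℕ) :
    (∑' k, if n ≤ k then a k else 0) + ∑ k ∈ Finset.range n, a k = ∑' k, a k := by
  rw [← ha.sum_add_tsum_nat_add n, add_comm]
  congr 1
  rw [← (add_left_injective n).tsum_eq]
  · simp
  · intro k hk
    have hnk : n ≤ k := by by_contra h; exact hk (if_neg h)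
    exact ⟨k - n, Nat.sub_add_cancel hnk⟩

lemma pos_of_mem_Dtheta {θ α₀ a : ℝ} (hθ : 0 < θ) (hα₀ : 0 < α₀) (ha : a ∈ Dtheta θ α₀) :
    0 < a := by
  obtain ⟨j, rfl⟩ := ha
  positivity

lemma div_mem_Dtheta {θ α₀ a : ℝ} (hθ : θ ≠ 0) (ha : a ∈ Dtheta θ α₀) : a / θ ∈ Dtheta θ α₀ := by
  obtain ⟨j, rfl⟩ := ha
  exact ⟨j - 1, by rw [zpow_sub_one₀ hθ]; ring⟩

section IndexFunction

variable {X Y : Type*} [NormedAddCommGroup X] [InnerProductSpace ℝ X]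
    [NormedAddCommGroup Y] [NormedSpace ℝ Y]

lemma abs_inner_rpow_le_of_inner_eq_comp (A : X →L[ℝ] Y) {v : X} {g : Y →L[ℝ] ℝ}
    (hg : ∀ z, ⟪v, z⟫ = g (A z)) {q : ℝ} (hq0 : 0 ≤ q) (hq1 : q ≤ 1) {x x' : X} {s : ℝ}
    (hs : ‖A x - A x'‖ ≤ s) :
    |⟪x, v⟫| ^ q ≤ |⟪x', v⟫| ^ q + ‖g‖ ^ q * s ^ q := by
  have hdiff : |⟪x, v⟫ - ⟪x', v⟫| ≤ ‖g‖ * s :=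
    calc |⟪x, v⟫ - ⟪x', v⟫| = ‖g (A x - A x')‖ := by
          rw [← inner_sub_left, real_inner_comm, hg, map_sub, Real.norm_eq_abs]
      _ ≤ ‖g‖ * ‖A x - A x'‖ := g.le_opNorm _
      _ ≤ ‖g‖ * s := by gcongr
  calc |⟪x, v⟫| ^ q ≤ |⟪x', v⟫| ^ q + |⟪x, v⟫ - ⟪x', v⟫| ^ q :=
        abs_rpow_le_abs_rpow_add_abs_sub_rpow _ _ hq0 hq1
    _ ≤ |⟪x', v⟫| ^ q + (‖g‖ * s) ^ q := by gcongr
    _ = |⟪x', v⟫| ^ q + ‖g‖ ^ q * s ^ q := by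
        rw [Real.mul_rpow (norm_nonneg _) ((norm_nonneg _).trans hs)]

variable (u : ℕ → X) (w : ℕ → ℝ) (q : ℝ) (xdag : X) (f : ℕ → Y →L[ℝ] ℝ)

noncomputable def phiTerm (t : ℝ) (n : ℕ) : ℝ :=
  (∑' k : ℕ, if n ≤ k then w k * |⟪xdag, u k⟫| ^ q else 0)
    + t ^ q * ∑ k ∈ Finset.filter (fun k => ⟪xdag, u k⟫ ≠ 0) (Finset.range n),
        w k * ‖f k‖ ^ q

lemma phiIdx_eq (t : ℝ) : phiIdx u w q xdag f t = 2 * ⨅ n, phiTerm u w q xdag f t n := rfl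

variable {u w q xdag f}

lemma phiTerm_nonneg (hw : ∀ k, 0 ≤ w k) {t : ℝ} (ht : 0 ≤ t) (n : ℕ) :
    0 ≤ phiTerm u w q xdag f t n :=
  add_nonneg (tsum_nonneg fun k => by split_ifs <;> positivity [hw k])
    (mul_nonneg (by positivity) (Finset.sum_nonneg fun k _ => by positivity [hw k]))

lemma phiTerm_le_div_mul (hw : ∀ k, 0 ≤ w k) (hq : q ≤ 1) {s t : ℝ} (ht : 0 < t) (hts : t ≤ s)
    (n : ℕ) : phiTerm u w q xdag f s n ≤ s / t * phiTerm u w q xdag f t n := by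
  have htail : 0 ≤ ∑' k : ℕ, if n ≤ k then w k * |⟪xdag, u k⟫| ^ q else 0 :=
    tsum_nonneg fun k => by split_ifs <;> positivity [hw k]
  have hhead : 0 ≤ ∑ k ∈ Finset.filter (fun k => ⟪xdag, u k⟫ ≠ 0) (Finset.range n),
      w k * ‖f k‖ ^ q :=
    Finset.sum_nonneg fun k _ => by positivity [hw k]
  rw [phiTerm, phiTerm, mul_add, ← mul_assoc]
  exact add_le_add (le_mul_of_one_le_left htail ((one_le_div ht).mpr hts))
    (mul_le_mul_of_nonneg_right (rpow_le_div_mul_rpow ht hts hq) hhead)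

lemma iInf_phiTerm_le_div_mul (hw : ∀ k, 0 ≤ w k) (hq : q ≤ 1) {s t : ℝ} (ht : 0 < t)
    (hts : t ≤ s) :
    ⨅ n, phiTerm u w q xdag f s n ≤ s / t * ⨅ n, phiTerm u w q xdag f t n := by
  rw [Real.mul_iInf_of_nonneg (div_nonneg (ht.le.trans hts) ht.le)]
  exact ciInf_mono ⟨0, Set.forall_mem_range.mpr (phiTerm_nonneg hw (ht.le.trans hts))⟩
    (phiTerm_le_div_mul hw hq ht hts)

lemma Rqw_le_add_phiTerm (A : X →L[ℝ] Y)
    (hf : ∀ k, ⟪xdag, u k⟫ ≠ 0 → ∀ x : X, ⟪u k, x⟫ = f k (A x))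
    (hw : ∀ k, 0 ≤ w k) (hq0 : 0 < q) (hq1 : q ≤ 1) (hxdag : MemMqw u w q xdag)
    {x : X} (hx : MemMqw u w q x) {s : ℝ} (hs : ‖A xdag - A x‖ ≤ s) (n : ℕ) :
    Rqw u w q xdag ≤ Rqw u w q x + phiTerm u w q xdag f s n := by
  set S := Finset.filter (fun k => ⟪xdag, u k⟫ ≠ 0) (Finset.range n)
  have hhead : ∑ k ∈ Finset.range n, w k * |⟪xdag, u k⟫| ^ q
      = ∑ k ∈ S, w k * |⟪xdag, u k⟫| ^ q := by
    refine (Finset.sum_filter_of_ne fun k _ hk => ?_).symm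
    contrapose! hk
    rw [hk, abs_zero, Real.zero_rpow hq0.ne', mul_zero]
  have hS : ∑ k ∈ S, w k * |⟪xdag, u k⟫| ^ q
      ≤ ∑ k ∈ S, w k * |⟪x, u k⟫| ^ q + s ^ q * ∑ k ∈ S, w k * ‖f k‖ ^ q := by
    rw [Finset.mul_sum, ← Finset.sum_add_distrib]
    refine Finset.sum_le_sum fun k hk => ?_
    have hk := abs_inner_rpow_le_of_inner_eq_comp A (hf k (Finset.mem_filter.1 hk).2)
      hq0.le hq1 hs
    calc w k * |⟪xdag, u k⟫| ^ q ≤ w k * (|⟪x, u k⟫| ^ q + ‖f k‖ ^ q * s ^ q) :=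
          mul_le_mul_of_nonneg_left hk (hw k)
      _ = _ := by ring
  have hRx : ∑ k ∈ S, w k * |⟪x, u k⟫| ^ q ≤ Rqw u w q x :=
    hx.sum_le_tsum S fun k _ => by positivity [hw k]
  calc Rqw u w q xdag
      = (∑' k, if n ≤ k then w k * |⟪xdag, u k⟫| ^ q else 0)
          + ∑ k ∈ S, w k * |⟪xdag, u k⟫| ^ q := by
        rw [Rqw, ← tsum_ite_le_add_sum_range hxdag n, hhead]
    _ ≤ Rqw u w q x + phiTerm u w q xdag f s n := by
        rw [phiTerm]
        linarith

lemma IsTikMinimizer.rpow_sub_rpow_le {A : X →L[ℝ] Y} {p α : ℝ} {ydel : Y} {xhat : X}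
    (h : IsTikMinimizer u w q A p α ydel xhat) (hp : 0 < p) {x : X} (hx : MemMqw u w q x) :
    ‖A xhat - ydel‖ ^ p - ‖A x - ydel‖ ^ p ≤ p * α * (Rqw u w q x - Rqw u w q xhat) := by
  have hmin := mul_le_mul_of_nonneg_left (h.2 x hx) hp.le
  simp only [Tik, mul_add, ← mul_assoc, mul_one_div_cancel hp.ne', one_mul] at hmin
  linarith

lemma IsTikMinimizer.mul_rpow_sub_rpow_le_iInf_phiTerm (A : X →L[ℝ] Y)
    (hf : ∀ k, ⟪xdag, u k⟫ ≠ 0 → ∀ x : X, ⟪u k, x⟫ = f k (A x))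
    (hw : ∀ k, 0 ≤ w k) (hq0 : 0 < q) (hq1 : q ≤ 1) (hxdag : MemMqw u w q xdag)
    {p α δ : ℝ} (hp : 0 < p) (hα : 0 ≤ α) {ydel : Y} (hyd : ‖A xdag - ydel‖ ≤ δ) {xhat : X}
    (h : IsTikMinimizer u w q A p α ydel xhat) {t : ℝ} (ht : 0 < t)
    (htd : t ≤ ‖A xhat - ydel‖ + δ) :
    t * (‖A xhat - ydel‖ ^ p - δ ^ p)
      ≤ p * α * (‖A xhat - ydel‖ + δ) * ⨅ n, phiTerm u w q xdag f t n := by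
  set d := ‖A xhat - ydel‖
  have hres : d ^ p - δ ^ p ≤ p * α * (Rqw u w q xdag - Rqw u w q xhat) :=
    (h.rpow_sub_rpow_le hp hxdag).trans' (by gcongr)
  have hdist : ‖A xdag - A xhat‖ ≤ d + δ := by
    linarith [norm_sub_le_norm_sub_add_norm_sub (A xdag) ydel (A xhat), norm_sub_rev ydel (A xhat)]
  have hvar : Rqw u w q xdag - Rqw u w q xhat ≤ ⨅ n, phiTerm u w q xdag f (d + δ) n :=
    le_ciInf fun n => by linarith [Rqw_le_add_phiTerm A hf hw hq0 hq1 hxdag h.1 hdist n]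
  calc t * (d ^ p - δ ^ p)
      ≤ t * (p * α * ((d + δ) / t * ⨅ n, phiTerm u w q xdag f t n)) := by
        gcongr
        exact hres.trans (by gcongr; exact hvar.trans (iInf_phiTerm_le_div_mul hw hq1 ht htd))
    _ = p * α * (d + δ) * ⨅ n, phiTerm u w q xdag f t n := by
        field_simp

end IndexFunction

theorem sdp_parameter_lower_bound_general
    {X Y : Type*} [NormedAddCommGroup X] [InnerProductSpace ℝ X]
    [NormedAddCommGroup Y] [NormedSpace ℝ Y]
    (u : ℕ → X)
    (A : X →L[ℝ] Y)
    (p q : ℝ) (hp : 1 < p) (hq0 : 0 < q) (hq1 : q < 1)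
    (w : ℕ → ℝ) (w0 : ℝ) (hw0 : 0 < w0) (hw : ∀ k, w0 ≤ w k)
    (xdag : X) (hxdag : MemMqw u w q xdag)
    (f : ℕ → Y →L[ℝ] ℝ)
    (hf : ∀ k, ⟪xdag, u k⟫ ≠ 0 → ∀ x : X, ⟪u k, x⟫ = f k (A x))
    (θ α₀ τ : ℝ) (hθ0 : 0 < θ) (hα₀ : 0 < α₀) (hτ : 1 < τ) :
    ∀ δ : ℝ, 0 < δ → ∀ ydel : Y, ‖A xdag - ydel‖ ≤ δ →
      ∀ xm : ℝ → X, (∀ α ∈ Dtheta θ α₀, IsTikMinimizer u w q A p α ydel (xm α)) →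
        ∀ αstar ∈ Dtheta θ α₀,
          ‖A (xm αstar) - ydel‖ ≤ τ * δ → τ * δ < ‖A (xm (αstar / θ)) - ydel‖ →
            (θ / (p * 2 ^ (p - 1))) * ((τ ^ p - 1) / (τ ^ p + 1)) *
                (((τ - 1) * δ) ^ p / phiIdx u w q xdag f ((τ - 1) * δ)) ≤ αstar := by
  intro δ hδ ydel hyd xm hxm αstar hαstar _ hdisc
  have hw_nonneg : ∀ k, 0 ≤ w k := fun k => hw0.le.trans (hw k)
  have hα : 0 < αstar / θ := div_pos (pos_of_mem_Dtheta hθ0 hα₀ hαstar) hθ0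
  set d := ‖A (xm (αstar / θ)) - ydel‖
  set t := (τ - 1) * δ
  set ψ := ⨅ n, phiTerm u w q xdag f t n
  have ht : 0 < t := mul_pos (by linarith) hδ
  have hψ : 0 ≤ ψ := Real.iInf_nonneg (phiTerm_nonneg hw_nonneg ht.le)
  have hkey : t * (d ^ p - δ ^ p) ≤ p * (αstar / θ) * (d + δ) * ψ :=
    (hxm _ (div_mem_Dtheta hθ0.ne' hαstar)).mul_rpow_sub_rpow_le_iInf_phiTerm A hf hw_nonneg hq0
      hq1.le hxdag (by linarith) hα.le hyd ht (by nlinarith)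
  have hbound : (τ ^ p - 1) / (τ ^ p + 1) * t ^ p ≤ αstar / θ * (p * 2 ^ p * ψ) := by
    refine le_of_mul_le_mul_right ?_ (by positivity : 0 < d + δ)
    calc (τ ^ p - 1) / (τ ^ p + 1) * t ^ p * (d + δ) ≤ 2 ^ p * t * (d ^ p - δ ^ p) :=
          discrepancy_rpow_bound hτ hδ hp hdisc.le
      _ ≤ 2 ^ p * (p * (αstar / θ) * (d + δ) * ψ) := by
          rw [mul_assoc]; gcongr
      _ = αstar / θ * (p * 2 ^ p * ψ) * (d + δ) := by ring
  rw [phiIdx_eq]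
  calc θ / (p * 2 ^ (p - 1)) * ((τ ^ p - 1) / (τ ^ p + 1)) * (t ^ p / (2 * ψ))
      = θ * ((τ ^ p - 1) / (τ ^ p + 1) * t ^ p) / (p * 2 ^ p * ψ) := by
        rw [Real.rpow_sub_one two_ne_zero]; field_simp
    -- also valid if `ψ = 0`, where the left-hand side is `0` because `x / 0 = 0`
    _ ≤ θ * (αstar / θ) :=
        div_le_of_le_mul₀ (by positivity) (by positivity)
          ((mul_le_mul_of_nonneg_left hbound hθ0.le).trans_eq (by ring))
    _ = αstar := by field_simp

/-- **Corollary 4.6: lower bound for the SDP parameter.** Under the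
assumptions of Theorems 4.3 and 4.5, a regularization parameter `α* ∈ Δ_θ` chosen according
to the sequential discrepancy principle satisfies
`α* ≥ (θ/(p 2^{p−1})) ((τ^p − 1)/(τ^p + 1)) Φ_{q,w}((τ−1)δ)` with
`Φ_{q,w}(t) = t^p / φ_{q,w}(t)`. -/
theorem sdp_parameter_lower_bound
    {X Y : Type*} [NormedAddCommGroup X] [InnerProductSpace ℝ X] [CompleteSpace X]
    [NormedAddCommGroup Y] [NormedSpace ℝ Y]
    (u : ℕ → X) (hu : Orthonormal ℝ u)
    (hspan : (Submodule.span ℝ (Set.range u)).topologicalClosure = ⊤)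
    (A : X →L[ℝ] Y) (hAinj : Function.Injective A)
    (hrange : ¬ IsClosed (Set.range A))
    (p q : ℝ) (hp : 1 < p) (hq0 : 0 < q) (hq1 : q < 1)
    (w : ℕ → ℝ) (w0 : ℝ) (hw0 : 0 < w0) (hw : ∀ k, w0 ≤ w k)
    (xdag : X) (hne : xdag ≠ 0) (hxdag : MemMqw u w q xdag)
    (f : ℕ → Y →L[ℝ] ℝ)
    (hf : ∀ k, ⟪xdag, u k⟫ ≠ 0 → ∀ x : X, ⟪u k, x⟫ = f k (A x))
    (θ α₀ τ : ℝ) (hθ0 : 0 < θ) (hθ1 : θ < 1) (hα₀ : 0 < α₀) (hτ : 1 < τ) :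
    ∀ δ : ℝ, 0 < δ → ∀ ydel : Y, ‖A xdag - ydel‖ ≤ δ →
      ∀ xm : ℝ → X, (∀ α ∈ Dtheta θ α₀, IsTikMinimizer u w q A p α ydel (xm α)) →
        ∀ αstar ∈ Dtheta θ α₀,
          ‖A (xm αstar) - ydel‖ ≤ τ * δ → τ * δ < ‖A (xm (αstar / θ)) - ydel‖ →
            (θ / (p * 2 ^ (p - 1))) * ((τ ^ p - 1) / (τ ^ p + 1)) *
                (((τ - 1) * δ) ^ p / phiIdx u w q xdag f ((τ - 1) * δ)) ≤ αstar :=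
  sdp_parameter_lower_bound_general u A p q hp hq0 hq1 w w0 hw0 hw xdag hxdag f hf θ α₀ τ hθ0 hα₀ hτ
end

section
/- Suppose there is K > 0 with K · sup{ |⟨x, E v⟩_X| : v ∈ V, ‖v‖_V ≤ 1 } ≤ ‖Ax‖_Y for all x ∈ X, let {u_k}_{k∈ℕ} be an orthonormal basis of X with u_k ∈ range(E) for all k ∈ supp(x†), and let x† satisfy Σ_{k=1}^∞ |⟨x†, u_k⟩_X| < ∞. Then there exists a concave index function φ (concave, non-decreasing, with lim_{t→0+} φ(t) = 0) such that for all x ∈ X with Σ_k |⟨x, u_k⟩_X| < ∞ the variational inequality Σ_k |⟨x − x†, u_k⟩_X| ≤ Σ_k |⟨x, u_k⟩_X| − Σ_k |⟨x†, u_k⟩_X| + φ(‖A(x − x†)‖_Y) holds. -/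
open scoped RealInnerProductSpace
open Filter Topology

/-- **Theorem 3.4: rates for ℓ¹-regularization via Gelfand triples.**
Let `(V, X, V*)` be a Gelfand triple with embedding `E : V → X`, `A : X → Y` bounded
injective with non-closed range, and suppose `K ‖E* x‖_{V*} ≤ ‖A x‖` for all `x ∈ X`.
If `{u_k}` is an orthonormal basis of `X` with `u_k ∈ range E` for all `k ∈ supp x†` and
`Σ_k |⟨x†, u_k⟩| < ∞`, then there is a concave index function `φ` (concave, non-decreasing,
`φ(t) → 0` as `t → 0+`) such that for all `x ∈ X` with `Σ_k |⟨x, u_k⟩| < ∞`,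
`Σ_k |⟨x − x†, u_k⟩| ≤ Σ_k |⟨x, u_k⟩| − Σ_k |⟨x†, u_k⟩| + φ(‖A(x − x†)‖)`. -/
theorem variational_inequality_l1_of_gelfand
    {X Y V : Type*}
    [NormedAddCommGroup X] [InnerProductSpace ℝ X] [CompleteSpace X]
    [SecondCountableTopology X]
    [NormedAddCommGroup Y] [NormedSpace ℝ Y]
    [NormedAddCommGroup V] [NormedSpace ℝ V] [TopologicalSpace.SeparableSpace V]
    (A : X →L[ℝ] Y) (hAinj : Function.Injective A)
    (hrange : ¬ IsClosed (Set.range A))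
    (E : V →L[ℝ] X) (hEinj : Function.Injective E) (hEdense : DenseRange E)
    (K : ℝ) (hK : 0 < K)
    (hKA : ∀ x : X, K * (⨆ v : {v : V // ‖v‖ ≤ 1}, |⟪x, E (v : V)⟫|) ≤ ‖A x‖)
    (u : ℕ → X) (hu : Orthonormal ℝ u)
    (hspan : (Submodule.span ℝ (Set.range u)).topologicalClosure = ⊤)
    (xdag : X)
    (hsmooth : ∀ k : ℕ, ⟪xdag, u k⟫ ≠ 0 → u k ∈ Set.range E)
    (hxdag : Summable fun k : ℕ => |⟪xdag, u k⟫|) :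
    ∃ φ : ℝ → ℝ,
      ConcaveOn ℝ (Set.Ici 0) φ ∧
      (∀ s t : ℝ, 0 ≤ s → s ≤ t → φ s ≤ φ t) ∧
      Tendsto φ (nhdsWithin 0 (Set.Ioi 0)) (nhds 0) ∧
      ∀ x : X, (Summable fun k : ℕ => |⟪x, u k⟫|) →
        ∑' k : ℕ, |⟪x - xdag, u k⟫| ≤
          (∑' k : ℕ, |⟪x, u k⟫|) - (∑' k : ℕ, |⟪xdag, u k⟫|) + φ (‖A (x - xdag)‖) := by
  classical
  -- choose preimages of u k under E on the support of xdag
  have hvex : ∀ k : ℕ, ∃ v : V, (⟪xdag, u k⟫ ≠ 0 → E v = u k) := by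
    intro k
    by_cases h : ⟪xdag, u k⟫ ≠ 0
    · obtain ⟨v, hv⟩ := hsmooth k h
      exact ⟨v, fun _ => hv⟩
    · exact ⟨0, fun h' => absurd h' h⟩
  choose v hvE using hvex
  -- the key consequence of hKA
  have key : ∀ (d : X) (w : V), K * |⟪d, E w⟫| ≤ ‖w‖ * ‖A d‖ := by
    intro d w
    by_cases hw : w = 0
    · simp [hw]
    · have hw' : (0 : ℝ) < ‖w‖ := norm_pos_iff.2 hw
      have hbddA : BddAbove (Set.range fun v : {v : V // ‖v‖ ≤ 1} => |⟪d, E (v : V)⟫|) := by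
        refine ⟨‖d‖ * ‖E‖, ?_⟩
        rintro r ⟨⟨w', hw'1⟩, rfl⟩
        have h5 : ‖E w'‖ ≤ ‖E‖ * ‖w'‖ := E.le_opNorm w'
        have h6 : ‖E‖ * ‖w'‖ ≤ ‖E‖ * 1 :=
          mul_le_mul_of_nonneg_left hw'1 (norm_nonneg (E : V →L[ℝ] X))
        calc |⟪d, E w'⟫| ≤ ‖d‖ * ‖E w'‖ := abs_real_inner_le_norm d (E w')
          _ ≤ ‖d‖ * (‖E‖ * 1) :=
              mul_le_mul_of_nonneg_left (h5.trans h6) (norm_nonneg d)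
          _ = ‖d‖ * ‖E‖ := by ring
      have hmem : ‖(‖w‖⁻¹ • w : V)‖ ≤ 1 := by
        rw [norm_smul, norm_inv, norm_norm, inv_mul_cancel₀ hw'.ne']
      have h1 : |⟪d, E ((‖w‖⁻¹ • w : V))⟫| ≤ ⨆ v : {v : V // ‖v‖ ≤ 1}, |⟪d, E (v : V)⟫| :=
        le_ciSup hbddA (⟨‖w‖⁻¹ • w, hmem⟩ : {v : V // ‖v‖ ≤ 1})
      have h2 : |⟪d, E ((‖w‖⁻¹ • w : V))⟫| = ‖w‖⁻¹ * |⟪d, E w⟫| := by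
        rw [map_smul, real_inner_smul_right, abs_mul, abs_inv, abs_norm]
      have h3 := hKA d
      have h4 : K * (‖w‖⁻¹ * |⟪d, E w⟫|) ≤ ‖A d‖ := by
        rw [← h2]
        exact le_trans (mul_le_mul_of_nonneg_left h1 hK.le) h3
      have heq : ‖w‖ * (K * (‖w‖⁻¹ * |⟪d, E w⟫|)) = K * |⟪d, E w⟫| := by
        field_simp
      calc K * |⟪d, E w⟫| = ‖w‖ * (K * (‖w‖⁻¹ * |⟪d, E w⟫|)) := heq.symm
        _ ≤ ‖w‖ * ‖A d‖ := mul_le_mul_of_nonneg_left h4 (norm_nonneg w)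
  -- slopes and tails
  set a : ℕ → ℝ := fun n => (2 / K) * ∑ k ∈ Finset.range n, ‖v k‖ with ha_def
  set b : ℕ → ℝ := fun n => 2 * ∑' k : ℕ, |⟪xdag, u (k + n)⟫| with hb_def
  have ha0 : ∀ n, 0 ≤ a n := by
    intro n
    apply mul_nonneg (by positivity)
    exact Finset.sum_nonneg fun k _ => norm_nonneg _
  have hb0 : ∀ n, 0 ≤ b n := by
    intro n
    apply mul_nonneg zero_le_two
    exact tsum_nonneg fun k => abs_nonneg _
  set φ : ℝ → ℝ := fun t => ⨅ n : ℕ, (a n * max t 0 + b n) with hφ_def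
  have hbdd : ∀ t : ℝ, BddBelow (Set.range fun n : ℕ => a n * max t 0 + b n) := by
    intro t
    refine ⟨0, ?_⟩
    rintro r ⟨n, rfl⟩
    show 0 ≤ a n * max t 0 + b n
    have h1 : 0 ≤ a n * max t 0 := mul_nonneg (ha0 n) (le_max_right t 0)
    linarith [hb0 n]
  have hφ0 : ∀ t : ℝ, 0 ≤ φ t := by
    intro t
    refine le_ciInf fun n => ?_
    have h1 : 0 ≤ a n * max t 0 := mul_nonneg (ha0 n) (le_max_right t 0)
    linarith [hb0 n]
  have hφle : ∀ (t : ℝ) (n : ℕ), φ t ≤ a n * max t 0 + b n := fun t n => ciInf_le (hbdd t) n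
  refine ⟨φ, ?_, ?_, ?_, ?_⟩
  · -- concavity
    refine ⟨convex_Ici 0, ?_⟩
    intro x hx y hy p q hp hq hpq
    refine le_ciInf fun n => ?_
    have hx0 : (0 : ℝ) ≤ x := hx
    have hy0 : (0 : ℝ) ≤ y := hy
    have hmx : max x 0 = x := max_eq_left hx0
    have hmy : max y 0 = y := max_eq_left hy0
    have hmz : max (p • x + q • y) 0 = p * x + q * y := by
      rw [smul_eq_mul, smul_eq_mul]
      exact max_eq_left (by positivity)
    have h1 : φ x ≤ a n * x + b n := by have h := hφle x n; rwa [hmx] at h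
    have h2 : φ y ≤ a n * y + b n := by have h := hφle y n; rwa [hmy] at h
    rw [smul_eq_mul, smul_eq_mul, hmz]
    calc p * φ x + q * φ y ≤ p * (a n * x + b n) + q * (a n * y + b n) := by gcongr
      _ = a n * (p * x + q * y) + (p + q) * b n := by ring
      _ = a n * (p * x + q * y) + b n := by rw [hpq, one_mul]
  · -- monotone
    intro s t hs hst
    refine le_ciInf fun n => ?_
    refine (hφle s n).trans ?_
    have h1 : max s 0 ≤ max t 0 := max_le_max hst le_rfl
    have h2 : a n * max s 0 ≤ a n * max t 0 := mul_le_mul_of_nonneg_left h1 (ha0 n)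
    linarith
  · -- tendsto 0 at 0+
    rw [Metric.tendsto_nhdsWithin_nhds]
    intro ε hε
    have htail : Tendsto (fun n : ℕ => ∑' k : ℕ, |⟪xdag, u (k + n)⟫|) atTop (nhds 0) :=
      tendsto_sum_nat_add fun j => |⟪xdag, u j⟫|
    obtain ⟨N, hN⟩ :=
      (htail.eventually_lt_const (show (0:ℝ) < ε / 4 by linarith)).exists
    refine ⟨(ε / 2) / (a N + 1), by positivity, ?_⟩
    intro t ht hdist
    rw [Real.dist_eq, sub_zero] at hdist ⊢
    rw [abs_of_nonneg (hφ0 t)]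
    have ht0 : (0:ℝ) < t := ht
    have htlt : t < (ε / 2) / (a N + 1) := lt_of_abs_lt hdist
    have h1 : φ t ≤ a N * t + b N := by
      have h := hφle t N
      rwa [max_eq_left ht0.le] at h
    have hpos : (0:ℝ) < a N + 1 := by linarith [ha0 N]
    have h2 : a N * t ≤ a N * ((ε / 2) / (a N + 1)) :=
      mul_le_mul_of_nonneg_left htlt.le (ha0 N)
    have h3 : a N * ((ε / 2) / (a N + 1)) < ε / 2 := by
      rw [← mul_div_assoc, div_lt_iff₀ hpos]
      nlinarith [ha0 N]
    have h4 : b N < ε / 2 := by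
      show 2 * ∑' k : ℕ, |⟪xdag, u (k + N)⟫| < ε / 2
      linarith [hN]
    calc φ t ≤ a N * t + b N := h1
      _ < ε / 2 + ε / 2 := by linarith
      _ = ε := by ring
  · -- the variational inequality
    intro x hx
    set d : X := x - xdag with hd_def
    have hdk : ∀ k, ⟪d, u k⟫ = ⟪x, u k⟫ - ⟪xdag, u k⟫ := fun k => inner_sub_left x xdag (u k)
    have hd : Summable fun k : ℕ => |⟪d, u k⟫| := by
      apply Summable.of_nonneg_of_le (fun k => abs_nonneg _) (fun k => ?_) (hx.add hxdag)
      rw [hdk k]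
      exact abs_sub _ _
    set t : ℝ := ‖A d‖ with ht_def
    have ht0 : 0 ≤ t := norm_nonneg _
    set g : ℕ → ℝ := fun k => |⟪d, u k⟫| - |⟪x, u k⟫| + |⟪xdag, u k⟫| with hg_def
    have hg : Summable g := (hd.sub hx).add hxdag
    have hg0 : ∀ k, 0 ≤ g k := by
      intro k
      have hh : |⟪x, u k⟫| ≤ |⟪d, u k⟫| + |⟪xdag, u k⟫| := by
        have he : ⟪x, u k⟫ = ⟪d, u k⟫ + ⟪xdag, u k⟫ := by rw [hdk k]; ring
        rw [he]
        exact abs_add_le _ _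
      show 0 ≤ |⟪d, u k⟫| - |⟪x, u k⟫| + |⟪xdag, u k⟫|
      linarith
    have hsum_eq : ∑' k, g k
        = (∑' k, |⟪d, u k⟫|) - (∑' k, |⟪x, u k⟫|) + ∑' k, |⟪xdag, u k⟫| := by
      simp only [hg_def]
      rw [Summable.tsum_add (hd.sub hx) hxdag, Summable.tsum_sub hd hx]
    -- reduce to bounding ∑' g by φ t
    have main : ∑' k, g k ≤ φ t := by
      refine le_ciInf fun n => ?_
      rw [max_eq_left ht0]
      have hsplit : ∑' k, g k = (∑ k ∈ Finset.range n, g k) + ∑' k, g (k + n) :=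
        (Summable.sum_add_tsum_nat_add n hg).symm
      rw [hsplit]
      have hhead : ∑ k ∈ Finset.range n, g k ≤ a n * t := by
        have hrw : a n * t = ∑ k ∈ Finset.range n, (2 / K * ‖v k‖ * t) := by
          show (2 / K * ∑ k ∈ Finset.range n, ‖v k‖) * t = _
          rw [Finset.mul_sum, Finset.sum_mul]
        rw [hrw]
        apply Finset.sum_le_sum
        intro k _
        by_cases hk : ⟪xdag, u k⟫ = 0
        · have hgk : g k = 0 := by
            show |⟪d, u k⟫| - |⟪x, u k⟫| + |⟪xdag, u k⟫| = 0
            rw [hdk k, hk, sub_zero, abs_zero]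
            ring
          rw [hgk]
          positivity
        · have h1 : g k ≤ 2 * |⟪d, u k⟫| := by
            have hh : |⟪xdag, u k⟫| - |⟪x, u k⟫| ≤ |⟪d, u k⟫| := by
              have hq := abs_sub_abs_le_abs_sub (⟪xdag, u k⟫) (⟪x, u k⟫)
              have he : ⟪xdag, u k⟫ - ⟪x, u k⟫ = -⟪d, u k⟫ := by rw [hdk k]; ring
              rw [he, abs_neg] at hq
              exact hq
            show |⟪d, u k⟫| - |⟪x, u k⟫| + |⟪xdag, u k⟫| ≤ 2 * |⟪d, u k⟫|
            linarith
          have h2 : K * |⟪d, u k⟫| ≤ ‖v k‖ * t := by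
            have hEv : E (v k) = u k := hvE k hk
            have hkey := key d (v k)
            rwa [hEv] at hkey
          have h5 : g k * K ≤ 2 * (‖v k‖ * t) := by nlinarith [h1, h2]
          rw [div_mul_eq_mul_div, div_mul_eq_mul_div, le_div_iff₀ hK]
          nlinarith [h5]
      have htail : ∑' k, g (k + n) ≤ b n := by
        have hgs : Summable fun k => g (k + n) := (summable_nat_add_iff n).2 hg
        have hxs : Summable fun k : ℕ => 2 * |⟪xdag, u (k + n)⟫| :=
          ((summable_nat_add_iff n).2 hxdag).mul_left 2
        have hle : ∀ k : ℕ, g (k + n) ≤ 2 * |⟪xdag, u (k + n)⟫| := by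
          intro k
          have hq := abs_sub_abs_le_abs_sub (⟪d, u (k + n)⟫) (⟪xdag, u (k + n)⟫)
          have he : ⟪d, u (k + n)⟫ - ⟪xdag, u (k + n)⟫ = ⟪x, u (k + n)⟫ - 2 * ⟪xdag, u (k + n)⟫ := by
            rw [hdk (k + n)]; ring
          have hh : |⟪d, u (k + n)⟫| - |⟪x, u (k + n)⟫| ≤ |⟪xdag, u (k + n)⟫| := by
            have hq2 := abs_sub_abs_le_abs_sub (⟪d, u (k + n)⟫) (⟪x, u (k + n)⟫)
            have he2 : ⟪d, u (k + n)⟫ - ⟪x, u (k + n)⟫ = -⟪xdag, u (k + n)⟫ := by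
              rw [hdk (k + n)]; ring
            rw [he2, abs_neg] at hq2
            exact hq2
          show |⟪d, u (k + n)⟫| - |⟪x, u (k + n)⟫| + |⟪xdag, u (k + n)⟫|
              ≤ 2 * |⟪xdag, u (k + n)⟫|
          linarith
        calc ∑' k, g (k + n) ≤ ∑' k : ℕ, 2 * |⟪xdag, u (k + n)⟫| := Summable.tsum_le_tsum hle hgs hxs
          _ = b n := tsum_mul_left
      linarith
    linarith [hsum_eq, main]
end

section
/- Fix μ > 1, ν > 0 and 1/μ < q ≤ 1, and assume |⟨x†, u_k⟩_X| ≤ K₁ k^{−μ} and ‖f_k‖_{Y*} ≤ K₂ k^{ν} for all k ∈ supp(x†), with constants K₁, K₂ > 0. Then there exists a constant C > 0 such that for all 0 < t ≤ 1 the index function with uniform weights w_k = 1 satisfies φ_q(t) := 2 inf_{n∈ℕ} ( Σ_{k=n+1}^∞ |⟨x†, u_k⟩_X|^q + t^q Σ_{k∈S_n(x†)} ‖f_k‖_{Y*}^q ) ≤ C t^{(μq−1)/(μ+ν)}. -/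
/-!
Cut the series at `n ≈ t^{-1/(μ+ν)}`. The tail `Σ_{k ≥ n} |⟨x†, u_k⟩|^q` is dominated by
`K₁^q Σ_{k ≥ n} k^{-μq}`, which telescopes against `k^{1-μq}` to `O(n^{1-μq})` because `μq > 1`;
the head `t^q Σ_{k < n} ‖f_k‖^q` has at most `n` terms, each at most `K₂^q n^{νq}`. With this
choice of `n` both bounds are `O(t^{(μq-1)/(μ+ν)})`.
-/

open scoped RealInnerProductSpace

namespace Real

lemma mul_rpow_neg_le_rpow_sub_rpow {p x : ℝ} (hp : 1 ≤ p) (hx : 0 < x) :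
    (p - 1) * (x + 1) ^ (-p) ≤ x ^ (-(p - 1)) - (x + 1) ^ (-(p - 1)) := by
  obtain ⟨c, ⟨hxc, hcx⟩, hslope⟩ := exists_hasDerivAt_eq_slope (fun y : ℝ => y ^ (-(p - 1)))
    (fun y => -(p - 1) * y ^ (-(p - 1) - 1)) (lt_add_one x)
    (continuousOn_id.rpow_const fun y hy => Or.inl (hx.trans_le hy.1).ne')
    (fun y hy => hasDerivAt_rpow_const (Or.inl (hx.trans hy.1).ne'))
  have hc : 0 < c := hx.trans hxc
  have hderiv : (p - 1) * c ^ (-p) = x ^ (-(p - 1)) - (x + 1) ^ (-(p - 1)) := by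
    rw [show -(p - 1) - 1 = -p by ring, add_sub_cancel_left, div_one] at hslope
    linarith
  rw [← hderiv]
  exact mul_le_mul_of_nonneg_left (rpow_le_rpow_of_nonpos hc hcx.le (by linarith)) (by linarith)

lemma sum_Ico_add_one_rpow_neg_le {p : ℝ} (hp : 1 < p) {n : ℕ} (hn : 0 < n) (m : ℕ) :
    ∑ k ∈ Finset.Ico n m, ((k : ℝ) + 1) ^ (-p) ≤ (n : ℝ) ^ (-(p - 1)) / (p - 1) := by
  have hp1 : 0 < p - 1 := sub_pos.mpr hp
  rcases le_or_gt n m with hnm | hmn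
  · rw [le_div_iff₀ hp1, Finset.sum_mul]
    calc ∑ k ∈ Finset.Ico n m, ((k : ℝ) + 1) ^ (-p) * (p - 1)
        ≤ ∑ k ∈ Finset.Ico n m, ((k : ℝ) ^ (-(p - 1)) - ((k : ℝ) + 1) ^ (-(p - 1))) := by
          refine Finset.sum_le_sum fun k hk => ?_
          have hk : (0 : ℝ) < k := by
            exact_mod_cast hn.trans_le (Finset.mem_Ico.mp hk).1
          linarith [mul_rpow_neg_le_rpow_sub_rpow hp.le hk]
      _ = (n : ℝ) ^ (-(p - 1)) - (m : ℝ) ^ (-(p - 1)) := by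
          set g : ℕ → ℝ := fun k => -(k : ℝ) ^ (-(p - 1))
          have hterm : ∀ k ∈ Finset.Ico n m,
              (k : ℝ) ^ (-(p - 1)) - ((k : ℝ) + 1) ^ (-(p - 1)) = g (k + 1) - g k := by
            intro k _
            simp only [g, Nat.cast_add_one]
            ring
          rw [Finset.sum_congr rfl hterm, Finset.sum_Ico_sub g hnm]
          ring
      _ ≤ (n : ℝ) ^ (-(p - 1)) := sub_le_self _ (by positivity)
  · rw [Finset.Ico_eq_empty_of_le hmn.le, Finset.sum_empty]
    positivity

lemma rpow_le_of_le_mul_rpow {b K x s q : ℝ} (hb : 0 ≤ b) (hK : 0 ≤ K) (hx : 0 ≤ x) (hq : 0 ≤ q)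
    (hbK : b ≤ K * x ^ s) : b ^ q ≤ K ^ q * x ^ (s * q) := by
  calc b ^ q ≤ (K * x ^ s) ^ q := rpow_le_rpow hb hbK hq
    _ = K ^ q * x ^ (s * q) := by rw [mul_rpow hK (rpow_nonneg hx s), ← rpow_mul hx]

end Real

open Real

lemma tsum_tail_rpow_le_of_abs_le {a : ℕ → ℝ} {K μ q : ℝ} (hK : 0 ≤ K) (hq : 0 < q)
    (hμq : 1 < μ * q) (ha : ∀ k, a k ≠ 0 → |a k| ≤ K * ((k : ℝ) + 1) ^ (-μ))
    {n : ℕ} (hn : 0 < n) :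
    (∑' k, if n ≤ k then |a k| ^ q else 0) ≤ K ^ q / (μ * q - 1) * (n : ℝ) ^ (-(μ * q - 1)) := by
  have hterm : ∀ k, |a k| ^ q ≤ K ^ q * ((k : ℝ) + 1) ^ (-(μ * q)) := by
    intro k
    by_cases hak : a k = 0
    · rw [hak, abs_zero, zero_rpow hq.ne']
      positivity
    · rw [← neg_mul]
      exact rpow_le_of_le_mul_rpow (abs_nonneg _) hK (by positivity) hq.le (ha k hak)
  refine tsum_le_of_sum_range_le (fun k => by split_ifs <;> positivity) fun m => ?_
  calc ∑ k ∈ Finset.range m, (if n ≤ k then |a k| ^ q else 0)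
      = ∑ k ∈ Finset.Ico n m, |a k| ^ q := by
        rw [← Finset.sum_filter]
        congr 1
        ext k
        simp only [Finset.mem_filter, Finset.mem_range, Finset.mem_Ico]
        tauto
    _ ≤ ∑ k ∈ Finset.Ico n m, K ^ q * ((k : ℝ) + 1) ^ (-(μ * q)) :=
        Finset.sum_le_sum fun k _ => hterm k
    _ ≤ K ^ q * ((n : ℝ) ^ (-(μ * q - 1)) / (μ * q - 1)) := by
        rw [← Finset.mul_sum]
        gcongr
        exact sum_Ico_add_one_rpow_neg_le hμq hn m
    _ = K ^ q / (μ * q - 1) * (n : ℝ) ^ (-(μ * q - 1)) := by ring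

lemma sum_rpow_le_of_le_mul_rpow {s : Finset ℕ} {n : ℕ} (hs : s ⊆ Finset.range n) {b : ℕ → ℝ}
    {K ν q : ℝ} (hK : 0 ≤ K) (hν : 0 ≤ ν) (hq : 0 ≤ q) (hb0 : ∀ k ∈ s, 0 ≤ b k)
    (hb : ∀ k ∈ s, b k ≤ K * ((k : ℝ) + 1) ^ ν) :
    ∑ k ∈ s, b k ^ q ≤ K ^ q * (n : ℝ) ^ (1 + ν * q) := by
  have hterm : ∀ k ∈ s, b k ^ q ≤ K ^ q * (n : ℝ) ^ (ν * q) := by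
    intro k hk
    have hkn : (k : ℝ) + 1 ≤ n := by exact_mod_cast Finset.mem_range.mp (hs hk)
    calc b k ^ q ≤ K ^ q * ((k : ℝ) + 1) ^ (ν * q) :=
          rpow_le_of_le_mul_rpow (hb0 k hk) hK (by positivity) hq (hb k hk)
      _ ≤ K ^ q * (n : ℝ) ^ (ν * q) := by gcongr
  have hcard : (s.card : ℝ) ≤ n := by
    exact_mod_cast (Finset.card_le_card hs).trans (Finset.card_range n).le
  calc ∑ k ∈ s, b k ^ q ≤ s.card * (K ^ q * (n : ℝ) ^ (ν * q)) := by
        simpa using Finset.sum_le_card_nsmul s _ _ hterm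
    _ ≤ n * (K ^ q * (n : ℝ) ^ (ν * q)) := by gcongr
    _ = K ^ q * (n : ℝ) ^ (1 + ν * q) := by
        rw [rpow_one_add' (by positivity) (by positivity)]; ring

lemma exists_nat_add_le_rpow {β γ A B τ : ℝ} (hβ : 0 < β) (hγ : 0 ≤ γ) (hA : 0 ≤ A)
    (hB : 0 ≤ B) (hτ : 0 < τ) (hτ1 : τ ≤ 1) :
    ∃ n : ℕ, 0 < n ∧
      A * (n : ℝ) ^ (-β) + τ * (B * (n : ℝ) ^ γ) ≤ (A + 2 ^ γ * B) * τ ^ (β / (β + γ)) := by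
  have hβγ : 0 < β + γ := by linarith
  -- the balancing point `r`, where `r ^ (-β) = τ * r ^ γ`
  set r := τ ^ (-1 / (β + γ)) with hr
  have hr1 : 1 ≤ r := one_le_rpow_of_pos_of_le_one_of_nonpos hτ hτ1
    (div_nonpos_of_nonpos_of_nonneg (by norm_num) hβγ.le)
  have hr0 : 0 < r := zero_lt_one.trans_le hr1
  have hr_neg_β : r ^ (-β) = τ ^ (β / (β + γ)) := by
    rw [hr, ← rpow_mul hτ.le]
    congr 1
    field_simp
  have hτr_γ : τ * r ^ γ = τ ^ (β / (β + γ)) := by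
    rw [hr, ← rpow_mul hτ.le, mul_comm, ← rpow_add_one hτ.ne']
    congr 1
    field_simp
    ring
  set n := ⌈r⌉₊
  have hrn : r ≤ n := Nat.le_ceil r
  have hn2r : (n : ℝ) ≤ 2 * r := Nat.ceil_le_two_mul (by linarith)
  refine ⟨n, Nat.cast_pos.mp (hr0.trans_le hrn), ?_⟩
  have htail : (n : ℝ) ^ (-β) ≤ τ ^ (β / (β + γ)) :=
    hr_neg_β ▸ rpow_le_rpow_of_nonpos hr0 hrn (by linarith)
  have hhead : τ * (n : ℝ) ^ γ ≤ 2 ^ γ * τ ^ (β / (β + γ)) := by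
    calc τ * (n : ℝ) ^ γ ≤ τ * (2 * r) ^ γ := by gcongr
      _ = 2 ^ γ * (τ * r ^ γ) := by rw [mul_rpow (by norm_num) hr0.le]; ring
      _ = 2 ^ γ * τ ^ (β / (β + γ)) := by rw [hτr_γ]
  calc A * (n : ℝ) ^ (-β) + τ * (B * (n : ℝ) ^ γ)
      = A * (n : ℝ) ^ (-β) + B * (τ * (n : ℝ) ^ γ) := by ring
    _ ≤ A * τ ^ (β / (β + γ)) + B * (2 ^ γ * τ ^ (β / (β + γ))) := by gcongr
    _ = (A + 2 ^ γ * B) * τ ^ (β / (β + γ)) := by ring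

lemma phiIdx_le {X Y : Type*} [NormedAddCommGroup X] [InnerProductSpace ℝ X]
    [NormedAddCommGroup Y] [NormedSpace ℝ Y]
    (u : ℕ → X) {w : ℕ → ℝ} (hw : ∀ k, 0 ≤ w k) (q : ℝ) (xdag : X) (f : ℕ → Y →L[ℝ] ℝ)
    {t : ℝ} (ht : 0 ≤ t) (n : ℕ) :
    phiIdx u w q xdag f t ≤ 2 * ((∑' k : ℕ, if n ≤ k then w k * |⟪xdag, u k⟫| ^ q else 0)
      + t ^ q * ∑ k ∈ Finset.filter (fun k => ⟪xdag, u k⟫ ≠ 0) (Finset.range n),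
          w k * ‖f k‖ ^ q) := by
  refine mul_le_mul_of_nonneg_left (ciInf_le ⟨0, ?_⟩ n) zero_le_two
  rintro _ ⟨m, rfl⟩
  have hterm_nonneg : ∀ k, 0 ≤ if m ≤ k then w k * |⟪xdag, u k⟫| ^ q else 0 := fun k => by
    split_ifs
    · exact mul_nonneg (hw k) (by positivity)
    · rfl
  exact add_nonneg (tsum_nonneg hterm_nonneg)
    (mul_nonneg (by positivity) (Finset.sum_nonneg fun k _ => mul_nonneg (hw k) (by positivity)))

theorem phi_monomial_decay_rate_general
    {X Y : Type*} [NormedAddCommGroup X] [InnerProductSpace ℝ X]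
    [NormedAddCommGroup Y] [NormedSpace ℝ Y]
    (u : ℕ → X)
    (xdag : X) (f : ℕ → Y →L[ℝ] ℝ)
    (μ ν q : ℝ) (hμ : 1 < μ) (hν : 0 < ν) (hq : 1 / μ < q)
    (K₁ K₂ : ℝ) (hK₁ : 0 < K₁) (hK₂ : 0 < K₂)
    (hx : ∀ k : ℕ, ⟪xdag, u k⟫ ≠ 0 → |⟪xdag, u k⟫| ≤ K₁ * ((k : ℝ) + 1) ^ (-μ))
    (hfk : ∀ k : ℕ, ⟪xdag, u k⟫ ≠ 0 → ‖f k‖ ≤ K₂ * ((k : ℝ) + 1) ^ ν) :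
    ∃ C : ℝ, 0 < C ∧ ∀ t : ℝ, 0 < t → t ≤ 1 →
      phiIdx u (fun _ => (1 : ℝ)) q xdag f t ≤ C * t ^ ((μ * q - 1) / (μ + ν)) := by
  have hq0 : 0 < q := (one_div_pos.mpr (zero_lt_one.trans hμ)).trans hq
  have hμq : 1 < μ * q := by rwa [div_lt_iff₀' (zero_lt_one.trans hμ)] at hq
  set A := K₁ ^ q / (μ * q - 1)
  set γ := 1 + ν * q
  refine ⟨2 * (A + 2 ^ γ * K₂ ^ q), by positivity, fun t ht ht1 => ?_⟩
  obtain ⟨n, hn, hbalance⟩ := exists_nat_add_le_rpow (A := A) (by linarith : 0 < μ * q - 1)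
    (by positivity : 0 ≤ γ) (by positivity) (by positivity : 0 ≤ K₂ ^ q)
    (rpow_pos_of_pos ht q) (rpow_le_one ht.le ht1 hq0.le)
  have htail := tsum_tail_rpow_le_of_abs_le hK₁.le hq0 hμq hx hn
  have hhead := sum_rpow_le_of_le_mul_rpow (Finset.filter_subset _ (Finset.range n))
    hK₂.le hν.le hq0.le (fun k _ => norm_nonneg (f k)) fun k hk => hfk k (Finset.mem_filter.mp hk).2
  have hexp : q * ((μ * q - 1) / (μ * q - 1 + γ)) = (μ * q - 1) / (μ + ν) := by
    rw [show μ * q - 1 + γ = (μ + ν) * q by ring]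
    field_simp
  calc phiIdx u (fun _ => (1 : ℝ)) q xdag f t
      ≤ 2 * (A * (n : ℝ) ^ (-(μ * q - 1)) + t ^ q * (K₂ ^ q * (n : ℝ) ^ γ)) := by
        refine (phiIdx_le u (fun _ => zero_le_one) q xdag f ht.le n).trans ?_
        simp only [one_mul]
        gcongr
    _ ≤ 2 * ((A + 2 ^ γ * K₂ ^ q) * (t ^ q) ^ ((μ * q - 1) / (μ * q - 1 + γ))) := by gcongr
    _ = 2 * (A + 2 ^ γ * K₂ ^ q) * t ^ ((μ * q - 1) / (μ + ν)) := by
        rw [← rpow_mul ht.le, hexp, mul_assoc]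

/-- **Remark 4.7, monomial decay.** If `|⟨x†, u_k⟩| ≤ K₁ k^{−μ}` and
`‖f_k‖ ≤ K₂ k^{ν}` (with 1-based index `k`, here `k+1` for `k : ℕ`) for all
`k ∈ supp x†`, with `μ > 1`, `ν > 0`, `1/μ < q ≤ 1`, then with uniform weights `w_k = 1`
there is `C > 0` such that `φ_q(t) ≤ C t^{(μq−1)/(μ+ν)}` for all `0 < t ≤ 1`. -/
theorem phi_monomial_decay_rate
    {X Y : Type*} [NormedAddCommGroup X] [InnerProductSpace ℝ X] [CompleteSpace X]
    [NormedAddCommGroup Y] [NormedSpace ℝ Y]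
    (u : ℕ → X) (hu : Orthonormal ℝ u)
    (xdag : X) (f : ℕ → Y →L[ℝ] ℝ)
    (μ ν q : ℝ) (hμ : 1 < μ) (hν : 0 < ν) (hq : 1 / μ < q) (hq1 : q ≤ 1)
    (K₁ K₂ : ℝ) (hK₁ : 0 < K₁) (hK₂ : 0 < K₂)
    (hx : ∀ k : ℕ, ⟪xdag, u k⟫ ≠ 0 → |⟪xdag, u k⟫| ≤ K₁ * ((k : ℝ) + 1) ^ (-μ))
    (hfk : ∀ k : ℕ, ⟪xdag, u k⟫ ≠ 0 → ‖f k‖ ≤ K₂ * ((k : ℝ) + 1) ^ ν) :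
    ∃ C : ℝ, 0 < C ∧ ∀ t : ℝ, 0 < t → t ≤ 1 →
      phiIdx u (fun _ => (1 : ℝ)) q xdag f t ≤ C * t ^ ((μ * q - 1) / (μ + ν)) :=
  phi_monomial_decay_rate_general u xdag f μ ν q hμ hν hq K₁ K₂ hK₁ hK₂ hx hfk
end

section
/- Let A : X → X be a bounded linear operator satisfying A u₁ = u₁ and A u_k = u_k/k − u_{k−1}/(k−1) for all k ≥ 2. Then u₁ does not belong to the range of the adjoint A*, i.e. there is no f ∈ X with A*f = u₁. -/
open scoped RealInnerProductSpace

/-- **Hegland's counterexample, Remark 2.4.** Let `{u_k}_{k ≥ 1}` be an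
orthonormal basis of the separable Hilbert space `X` (indexed here by `k : ℕ`, with `u k`
playing the role of `u_{k+1}`) and let `A : X → X` be a bounded linear operator with
`A u₁ = u₁` and `A u_k = u_k / k − u_{k−1}/(k−1)` for `k ≥ 2`. Then `u₁ ∉ 𝓡(A*)`:
there is no `f ∈ X` with `A* f = u₁`, i.e. with `⟨u₁, x⟩ = ⟨f, A x⟩` for all `x`. -/
theorem hegland_counterexample
    {X : Type*} [NormedAddCommGroup X] [InnerProductSpace ℝ X] [CompleteSpace X]
    (u : ℕ → X) (hu : Orthonormal ℝ u)
    (hspan : (Submodule.span ℝ (Set.range u)).topologicalClosure = ⊤)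
    (A : X →L[ℝ] X)
    (hA1 : A (u 0) = u 0)
    (hAk : ∀ k : ℕ, A (u (k + 1)) =
      ((k : ℝ) + 2)⁻¹ • u (k + 1) - ((k : ℝ) + 1)⁻¹ • u k) :
    ¬ ∃ f : X, ∀ x : X, ⟪u 0, x⟫ = ⟪f, A x⟫ := by
  rintro ⟨f, hf⟩
  have hnorm : ∀ k, ‖u k‖ = 1 := fun k => hu.1 k
  -- ⟪f, u k⟫ = k + 1
  have hc : ∀ k : ℕ, ⟪f, u k⟫ = (k : ℝ) + 1 := by
    intro k
    induction k with
    | zero =>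
      have h0 := hf (u 0)
      rw [hA1, real_inner_self_eq_norm_sq, hnorm 0] at h0
      simpa using h0.symm
    | succ k ih =>
      have h1 := hf (u (k + 1))
      rw [hAk k, inner_sub_right, real_inner_smul_right, real_inner_smul_right, ih,
        hu.2 (by omega : (0 : ℕ) ≠ k + 1)] at h1
      have hk1 : ((k : ℝ) + 1) ≠ 0 := by positivity
      have hk2 : ((k : ℝ) + 2) ≠ 0 := by positivity
      field_simp at h1
      push_cast
      linarith [h1]
  -- but |⟪f, u k⟫| ≤ ‖f‖
  obtain ⟨k, hk⟩ := exists_nat_gt ‖f‖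
  have hb : |⟪f, u k⟫| ≤ ‖f‖ := by
    calc |⟪f, u k⟫| ≤ ‖f‖ * ‖u k‖ := abs_real_inner_le_norm f (u k)
    _ = ‖f‖ := by rw [hnorm k, mul_one]
  rw [hc k] at hb
  have : (k : ℝ) + 1 ≤ ‖f‖ := le_trans (le_abs_self _) hb
  linarith
end
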